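/- arXiv:2007.14194 — 11 statements merged into one kernel-verified Lean document; each statement's English description precedes it below -/
import Mathlib

section
/- Let 𝒜 ⊆ M_n(ℝ) be a unital subalgebra containing all diagonal matrices, let A ∈ 𝒜 be a covering matrix for 𝒜 (i.e. for every (i,j), a_{ij} ≠ 0 whenever some matrix of 𝒜 has a nonzero (i,j) entry), and let D = diag(d_1,…,d_n) with d_i ≠ d_j for i ≠ j. Then the unital subalgebra generated by A and D equals 𝒜. -/
/-!
Lagrange interpolation at the distinct nodes `dᵢ` shows that every diagonal matrix is a polynomial
in `D`. Then `Eᵢᵢ A Eⱼⱼ = aᵢⱼ Eᵢⱼ` puts every matrix unit `Eᵢⱼ` with `aᵢⱼ ≠ 0` into the generated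
algebra, and by the covering property these units span `𝒜`.
-/

open Matrix

namespace Matrix

variable {K ι : Type*} [Field K] [Fintype ι] [DecidableEq ι]

theorem diagonal_mem_adjoin_diagonal {d : ι → K} (hd : Function.Injective d) (f : ι → K) :
    diagonal f ∈ Algebra.adjoin K {diagonal d} := by
  rw [Algebra.adjoin_singleton_eq_range_aeval]
  set p := Lagrange.interpolate Finset.univ d f
  refine ⟨p, (?_ : Polynomial.aeval (diagonal d) p = diagonal f)⟩
  have hinterp : Polynomial.aeval d p = f := by
    ext i
    rw [Polynomial.aeval_fn_apply, Polynomial.coe_aeval_eq_eval]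
    exact Lagrange.eval_interpolate_at_node f hd.injOn (Finset.mem_univ i)
  simpa only [diagonalAlgHom_apply, hinterp] using
    Polynomial.aeval_algHom_apply (diagonalAlgHom K) d p

variable {S : Subalgebra K (Matrix ι ι K)} {A : Matrix ι ι K}

theorem single_mem_of_diagonal_mem (hdiag : ∀ f, diagonal f ∈ S) (hA : A ∈ S) {i j : ι}
    (hij : A i j ≠ 0) (c : K) : single i j c ∈ S := by
  have hsingle : single i j c = single i i (c / A i j) * A * single j j 1 := by
    rw [single_mul_mul_single, mul_one, div_mul_cancel₀ c hij]
  rw [hsingle, ← diagonal_single, ← diagonal_single]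
  exact S.mul_mem (S.mul_mem (hdiag _) hA) (hdiag _)

theorem mem_of_diagonal_mem_of_ne_zero (hdiag : ∀ f, diagonal f ∈ S) (hA : A ∈ S)
    {X : Matrix ι ι K} (hX : ∀ i j, X i j ≠ 0 → A i j ≠ 0) : X ∈ S := by
  rw [matrix_eq_sum_single X]
  refine S.sum_mem fun i _ => S.sum_mem fun j _ => ?_
  by_cases hXij : X i j = 0
  · rw [hXij, single_zero]
    exact S.zero_mem
  · exact single_mem_of_diagonal_mem hdiag hA (hX i j hXij) _

end Matrix

/-- If a unital subalgebra `𝒜 ⊆ Mₙ(ℝ)` contains all diagonal matrices, `A ∈ 𝒜` is a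
covering matrix for `𝒜`, and `D` is a diagonal matrix with pairwise distinct diagonal
entries, then `𝒜` is generated by `A` and `D`. -/
theorem stmt3 (n : ℕ) (𝒜 : Subalgebra ℝ (Matrix (Fin n) (Fin n) ℝ))
    (hdiag : ∀ d : Fin n → ℝ, Matrix.diagonal d ∈ 𝒜)
    (A : Matrix (Fin n) (Fin n) ℝ) (hA : A ∈ 𝒜)
    (hcover : ∀ i j : Fin n, (∃ X ∈ 𝒜, X i j ≠ 0) → A i j ≠ 0)
    (d : Fin n → ℝ) (hd : Function.Injective d) :
    Algebra.adjoin ℝ {A, Matrix.diagonal d} = 𝒜 := by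
  refine le_antisymm (Algebra.adjoin_le (Set.pair_subset hA (hdiag d))) fun X hX => ?_
  have hdiag' (f : Fin n → ℝ) : diagonal f ∈ Algebra.adjoin ℝ {A, diagonal d} :=
    Algebra.adjoin_mono (Set.subset_insert _ _) (diagonal_mem_adjoin_diagonal hd f)
  exact mem_of_diagonal_mem_of_ne_zero hdiag' (Algebra.subset_adjoin (Set.mem_insert A _))
    fun i j hXij => hcover i j ⟨X, hX, hXij⟩
end

section
/- Let 𝒜 ⊆ M_n(ℝ) be a unital matrix algebra. The following are equivalent: (1) 𝒜 contains a nonnegative matrix A with Ω(A) = Ω(𝒜); (2) 𝒜 is generated (as a unital algebra) by a set of entrywise nonnegative matrices; (3) 𝒜 has a vector-space basis consisting of entrywise nonnegative matrices. -/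
/-!
The nonnegative matrices of `𝒜` form a convex cone, and each of the three conditions amounts to
this cone spanning `𝒜`. If it does, then for every position in `Ω(𝒜)` some nonnegative matrix
of `𝒜` is nonzero there, and the sum of these witnesses covers `𝒜`. Conversely, if `A ≥ 0` covers
`𝒜`, every `X ∈ 𝒜` is `(X + r A) - r A` with `X + r A ≥ 0` for `r` large, so the cone spans and a
basis can be extracted from it. Since products of nonnegative matrices are nonnegative, the algebra
generated by nonnegative matrices is spanned by nonnegative words in them, whereas a nonnegative
basis generates `𝒜` already as a vector space.
-/

open Matrix

theorem Algebra.adjoin_eq_of_span_eq {R A : Type*} [CommSemiring R] [Semiring A] [Algebra R A]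
    {S : Set A} {B : Subalgebra R A} (h : Submodule.span R S = Subalgebra.toSubmodule B) :
    Algebra.adjoin R S = B :=
  Algebra.adjoin_eq_of_le B (fun _ hx => h.le (Submodule.subset_span hx))
    fun _ hx => Algebra.span_le_adjoin R S (h.ge hx)

namespace Matrix

section OrderedSemiring

variable {m n R : Type*} [Fintype m] [Fintype n]
  [CommSemiring R] [PartialOrder R] [IsOrderedRing R]

theorem exists_nonneg_mem_span_covers {T : Set (Matrix m n R)}
    (hT : ∀ A ∈ T, ∀ i j, 0 ≤ A i j) :
    ∃ A ∈ Submodule.span R T, (∀ i j, 0 ≤ A i j) ∧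
      ∀ i j, (∃ X ∈ Submodule.span R T, X i j ≠ 0) → A i j ≠ 0 := by
  classical
  have witness : ∀ p : m × n, ∃ t ∈ Submodule.span R T, (∀ i j, 0 ≤ t i j) ∧
      ((∃ X ∈ Submodule.span R T, X p.1 p.2 ≠ 0) → t p.1 p.2 ≠ 0) := by
    rintro ⟨i, j⟩
    by_cases hij : ∃ X ∈ Submodule.span R T, X i j ≠ 0
    · obtain ⟨t, htT, htij⟩ : ∃ t ∈ T, t i j ≠ 0 := by
        by_contra! hzero
        obtain ⟨X, hX, hXij⟩ := hij
        have hker : Submodule.span R T ≤ LinearMap.ker (entryLinearMap R R i j) :=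
          Submodule.span_le.mpr hzero
        exact hXij (hker hX)
      exact ⟨t, Submodule.subset_span htT, hT t htT, fun _ => htij⟩
    · exact ⟨0, zero_mem _, fun _ _ => le_rfl, fun h => absurd h hij⟩
  choose t ht_mem ht_nonneg ht_cover using witness
  refine ⟨∑ p, t p, sum_mem fun p _ => ht_mem p, fun i j => ?_, fun i j hij => ?_⟩
  · rw [sum_apply]
    exact Finset.sum_nonneg fun p _ => ht_nonneg p i j
  · rw [sum_apply, Ne, Finset.sum_eq_zero_iff_of_nonneg fun p _ => ht_nonneg p i j]
    exact fun hzero => ht_cover (i, j) hij (hzero (i, j) (Finset.mem_univ _))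

theorem nonneg_of_mem_submonoidClosure [DecidableEq n] {S : Set (Matrix n n R)}
    (hS : ∀ A ∈ S, ∀ i j, 0 ≤ A i j) {X : Matrix n n R} (hX : X ∈ Submonoid.closure S) :
    ∀ i j, 0 ≤ X i j := by
  induction hX using Submonoid.closure_induction with
  | mem A hA => exact hS A hA
  | one => exact fun i j => by rw [one_apply]; split_ifs <;> simp
  | mul A B _ _ hA hB =>
    exact fun i j => Finset.sum_nonneg fun k _ => mul_nonneg (hA i k) (hB k j)

theorem exists_nonneg_mem_adjoin_covers [DecidableEq n] {S : Set (Matrix n n R)}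
    (hS : ∀ A ∈ S, ∀ i j, 0 ≤ A i j) :
    ∃ A ∈ Algebra.adjoin R S, (∀ i j, 0 ≤ A i j) ∧
      ∀ i j, (∃ X ∈ Algebra.adjoin R S, X i j ≠ 0) → A i j ≠ 0 := by
  have h := exists_nonneg_mem_span_covers fun _ hX => nonneg_of_mem_submonoidClosure hS hX
  simpa only [← Algebra.adjoin_eq_span, Subalgebra.mem_toSubmodule] using h

end OrderedSemiring

section OrderedField

variable {m n 𝕜 : Type*} [Fintype m] [Fintype n]
  [Field 𝕜] [LinearOrder 𝕜] [IsStrictOrderedRing 𝕜]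

theorem exists_add_smul_nonneg {A X : Matrix m n 𝕜} (hA : ∀ i j, 0 ≤ A i j)
    (hXA : ∀ i j, A i j = 0 → X i j = 0) : ∃ r : 𝕜, ∀ i j, 0 ≤ X i j + r * A i j := by
  -- `|X i j| / A i j` is `0` where `A i j = 0`, exactly where no shift is needed.
  refine ⟨∑ p : m × n, |X p.1 p.2| / A p.1 p.2, fun i j => ?_⟩
  rcases (hA i j).eq_or_lt with hzero | hpos
  · simp [← hzero, hXA i j hzero.symm]
  · have hle : |X i j| / A i j ≤ ∑ p : m × n, |X p.1 p.2| / A p.1 p.2 :=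
      Finset.single_le_sum (f := fun p : m × n => |X p.1 p.2| / A p.1 p.2)
        (fun p _ => div_nonneg (abs_nonneg _) (hA _ _)) (Finset.mem_univ (i, j))
    linarith [(div_le_iff₀ hpos).mp hle, neg_abs_le (X i j)]

variable {V : Submodule 𝕜 (Matrix m n 𝕜)} {A : Matrix m n 𝕜}

theorem span_nonneg_eq_of_covers (hAV : A ∈ V) (hA : ∀ i j, 0 ≤ A i j)
    (hcover : ∀ i j, (∃ X ∈ V, X i j ≠ 0) → A i j ≠ 0) :
    Submodule.span 𝕜 {X | X ∈ V ∧ ∀ i j, 0 ≤ X i j} = V := by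
  refine le_antisymm (Submodule.span_le.mpr fun X hX => hX.1) fun X hX => ?_
  obtain ⟨r, hr⟩ := exists_add_smul_nonneg hA fun i j hAij =>
    by_contra fun hXij => hcover i j ⟨X, hX, hXij⟩ hAij
  have hshift : X + r • A ∈ Submodule.span 𝕜 {X | X ∈ V ∧ ∀ i j, 0 ≤ X i j} :=
    Submodule.subset_span ⟨add_mem hX (V.smul_mem r hAV), by simpa using hr⟩
  have hA_mem : A ∈ Submodule.span 𝕜 {X | X ∈ V ∧ ∀ i j, 0 ≤ X i j} :=
    Submodule.subset_span ⟨hAV, hA⟩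
  simpa using sub_mem hshift (Submodule.smul_mem _ r hA_mem)

theorem exists_nonneg_basis_of_covers (hAV : A ∈ V) (hA : ∀ i j, 0 ≤ A i j)
    (hcover : ∀ i j, (∃ X ∈ V, X i j ≠ 0) → A i j ≠ 0) :
    ∃ S : Set (Matrix m n 𝕜), (∀ B ∈ S, ∀ i j, 0 ≤ B i j) ∧
      LinearIndependent 𝕜 ((↑) : S → Matrix m n 𝕜) ∧ Submodule.span 𝕜 S = V := by
  obtain ⟨S, hS, hspan, hli⟩ := exists_linearIndependent 𝕜 {X | X ∈ V ∧ ∀ i j, 0 ≤ X i j}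
  exact ⟨S, fun B hB => (hS hB).2, hli, hspan.trans (span_nonneg_eq_of_covers hAV hA hcover)⟩

end OrderedField

end Matrix

/-- For a unital matrix algebra `𝒜 ⊆ Mₙ(ℝ)`, TFAE: (1) `𝒜` has a nonnegative covering
matrix; (2) `𝒜` is generated by a set of nonnegative matrices; (3) `𝒜` has a basis of
nonnegative matrices. -/
theorem stmt4 (n : ℕ) (𝒜 : Subalgebra ℝ (Matrix (Fin n) (Fin n) ℝ)) :
    ((∃ A ∈ 𝒜, (∀ i j, 0 ≤ A i j) ∧ ∀ i j, (∃ X ∈ 𝒜, X i j ≠ 0) → A i j ≠ 0) ↔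
      (∃ S : Set (Matrix (Fin n) (Fin n) ℝ), (∀ A ∈ S, ∀ i j, 0 ≤ A i j) ∧
        Algebra.adjoin ℝ S = 𝒜)) ∧
    ((∃ S : Set (Matrix (Fin n) (Fin n) ℝ), (∀ A ∈ S, ∀ i j, 0 ≤ A i j) ∧
        Algebra.adjoin ℝ S = 𝒜) ↔
      (∃ S : Set (Matrix (Fin n) (Fin n) ℝ), (∀ A ∈ S, ∀ i j, 0 ≤ A i j) ∧
        LinearIndependent ℝ ((↑) : S → Matrix (Fin n) (Fin n) ℝ) ∧
        Submodule.span ℝ S = Subalgebra.toSubmodule 𝒜)) := by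
  refine ⟨⟨?_, ?_⟩, ⟨?_, ?_⟩⟩
  · rintro ⟨A, hA𝒜, hA, hcover⟩
    obtain ⟨S, hS, -, hspan⟩ :=
      exists_nonneg_basis_of_covers (V := Subalgebra.toSubmodule 𝒜) hA𝒜 hA hcover
    exact ⟨S, hS, Algebra.adjoin_eq_of_span_eq hspan⟩
  · rintro ⟨S, hS, rfl⟩
    exact exists_nonneg_mem_adjoin_covers hS
  · rintro ⟨S, hS, rfl⟩
    obtain ⟨A, hA𝒜, hA, hcover⟩ := exists_nonneg_mem_adjoin_covers hS
    exact exists_nonneg_basis_of_covers hA𝒜 hA hcover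
  · rintro ⟨S, hS, -, hspan⟩
    exact ⟨S, hS, Algebra.adjoin_eq_of_span_eq hspan⟩
end

section
/- If A ∈ M_n(ℝ) has a real eigenvalue of algebraic multiplicity 1, then there exists an invertible real matrix C such that the unital algebra generated by C^{-1}AC is generated by a single entrywise strictly positive matrix; i.e., there exists a strictly positive matrix B with ⟨B⟩ = C^{-1}⟨A⟩C. -/
/-!
Write `χ_A = (X - λ) g` with `g(λ) ≠ 0`. Cayley–Hamilton makes `P = g(A) / g(λ)` an idempotent of
`⟨A⟩` with `A P = P A = λ P`; it is nonzero since `g(λ)` lies in the spectrum of `g(A)`, and it has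
rank one because its columns are `λ`-eigenvectors and the geometric multiplicity of `λ` is `1`.
Splitting along `P` gives `g(A + t P) = g(λ + t) P`, so `A + t P` still generates `⟨A⟩` whenever
`g(λ + t) ≠ 0`. A similarity `C` moving `P = u vᵀ` to the matrix with all entries `1 / n` turns
`A + t P` into `C⁻¹ A C` with `t / n` added to every entry, which is strictly positive for
large `t`.
-/

open Matrix Polynomial Filter Module

theorem SemiconjBy.aeval {K R : Type*} [CommSemiring K] [Semiring R] [Algebra K R] {c a b : R}
    (h : SemiconjBy c a b) (f : K[X]) : SemiconjBy c (aeval a f) (aeval b f) := by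
  induction f using Polynomial.induction_on with
  | C r =>
    rw [aeval_C, aeval_C]
    exact Algebra.commute_algebraMap_right r c
  | add p q hp hq => simpa only [map_add] using hp.add_right hq
  | monomial k r ih =>
    simpa only [pow_succ, ← mul_assoc, map_mul, aeval_X] using ih.mul_right h

theorem mul_aeval_eq_eval_smul {K R : Type*} [CommSemiring K] [Semiring R] [Algebra K R]
    {a b : R} {μ : K} (h : b * a = μ • b) (f : K[X]) : b * aeval a f = f.eval μ • b := by
  have hb : SemiconjBy b a (algebraMap K R μ) := by rw [SemiconjBy, h, Algebra.smul_def]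
  rw [(hb.aeval f).eq, aeval_algebraMap_apply_eq_algebraMap_eval, Algebra.smul_def]

section SpectralProjection

variable {K R : Type*} [Field K] [Ring R] [Algebra K R]

/-- With `(X - μ) g` annihilating `a` and `g(μ) ≠ 0`, this is the projection onto the
`μ`-eigenspace of `a` along the sum of its other generalized eigenspaces. -/
noncomputable def spectralProj (a : R) (μ : K) (g : K[X]) : R := (g.eval μ)⁻¹ • aeval a g

variable {a : R} {μ : K} {g : K[X]}

theorem commute_spectralProj : Commute a (spectralProj a μ g) :=
  ((Commute.refl a).aeval g).smul_right _

theorem spectralProj_mem_adjoin : spectralProj a μ g ∈ Algebra.adjoin K {a} :=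
  Subalgebra.smul_mem _ (aeval_mem_adjoin_singleton K a) _

theorem spectralProj_mul (ha : aeval a ((X - C μ) * g) = 0) :
    spectralProj a μ g * a = μ • spectralProj a μ g := by
  rw [map_mul, map_sub, aeval_X, aeval_C, sub_mul, sub_eq_zero, ← Algebra.smul_def] at ha
  rw [← commute_spectralProj.eq, spectralProj, mul_smul_comm, ha, smul_comm]

theorem mul_spectralProj (ha : aeval a ((X - C μ) * g) = 0) :
    a * spectralProj a μ g = μ • spectralProj a μ g :=
  commute_spectralProj.eq.trans (spectralProj_mul ha)

theorem spectralProj_mul_self (ha : aeval a ((X - C μ) * g) = 0) (hg : g.eval μ ≠ 0) :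
    spectralProj a μ g * spectralProj a μ g = spectralProj a μ g := by
  calc spectralProj a μ g * spectralProj a μ g
      = (g.eval μ)⁻¹ • (spectralProj a μ g * aeval a g) := mul_smul_comm _ _ _
    _ = spectralProj a μ g := by
      rw [mul_aeval_eq_eval_smul (spectralProj_mul ha), smul_smul, inv_mul_cancel₀ hg, one_smul]

theorem spectralProj_ne_zero (hg : g.eval μ ≠ 0) (hμ : μ ∈ spectrum K a) :
    spectralProj a μ g ≠ 0 := by
  have hgμ : g.eval μ ∈ spectrum K (aeval a g) := spectrum.subset_polynomial_aeval a g ⟨μ, hμ, rfl⟩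
  intro hP
  rw [spectralProj, smul_eq_zero_iff_right (inv_ne_zero hg)] at hP
  rw [hP] at hgμ
  cases subsingleton_or_nontrivial R with
  | inl _ => simp [spectrum.of_subsingleton] at hgμ
  | inr _ => exact hg (by simpa [spectrum.zero_eq] using hgμ)

theorem aeval_add_smul_spectralProj (ha : aeval a ((X - C μ) * g) = 0) (hg : g.eval μ ≠ 0)
    (t : K) : aeval (a + t • spectralProj a μ g) g = g.eval (μ + t) • spectralProj a μ g := by
  set P := spectralProj a μ g with hP_def
  have hPP : P * P = P := spectralProj_mul_self ha hg
  have hPa : P * a = μ • P := spectralProj_mul ha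
  have hP : P * (a + t • P) = (μ + t) • P := by rw [mul_add, hPa, mul_smul_comm, hPP, add_smul]
  have hQ : SemiconjBy (1 - P) (a + t • P) a := by
    rw [SemiconjBy, sub_mul, one_mul, hP, mul_sub, mul_one, mul_spectralProj ha, add_smul]
    abel
  have hgP : aeval a g * (1 - P) = 0 := by
    rw [show aeval a g = g.eval μ • P by rw [hP_def, spectralProj, smul_smul,
      mul_inv_cancel₀ hg, one_smul], smul_mul_assoc, mul_sub, mul_one, hPP, sub_self, smul_zero]
  calc aeval (a + t • P) g = (1 - P) * aeval (a + t • P) g + P * aeval (a + t • P) g := by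
        rw [← add_mul, sub_add_cancel, one_mul]
    _ = g.eval (μ + t) • P := by
        rw [(hQ.aeval g).eq, hgP, zero_add, mul_aeval_eq_eval_smul hP]

theorem adjoin_add_smul_spectralProj (ha : aeval a ((X - C μ) * g) = 0) (hg : g.eval μ ≠ 0)
    {t : K} (ht : g.eval (μ + t) ≠ 0) :
    Algebra.adjoin K {a + t • spectralProj a μ g} = Algebra.adjoin K {a} := by
  set P := spectralProj a μ g
  have hP : P ∈ Algebra.adjoin K {a + t • P} := by
    have h := Subalgebra.smul_mem _ (aeval_mem_adjoin_singleton K (a + t • P) (p := g))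
      (g.eval (μ + t))⁻¹
    rwa [aeval_add_smul_spectralProj ha hg, smul_smul, inv_mul_cancel₀ ht, one_smul] at h
  apply le_antisymm
  · exact Algebra.adjoin_singleton_le <| add_mem (Algebra.self_mem_adjoin_singleton K a)
      (Subalgebra.smul_mem _ spectralProj_mem_adjoin t)
  · refine Algebra.adjoin_singleton_le ?_
    simpa using sub_mem (Algebra.self_mem_adjoin_singleton K (a + t • P))
      (Subalgebra.smul_mem _ hP t)

end SpectralProjection

namespace Matrix

variable {K : Type*} [Field K] {m n : Type*}

theorem exists_eq_vecMulVec_of_col_mem [Fintype m] {W : Submodule K (m → K)}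
    (hW : finrank K W ≤ 1) (P : Matrix m n K) (hP : ∀ j, P.col j ∈ W) :
    ∃ u v, P = vecMulVec u v := by
  have := (W.finrank_le_one_iff_isPrincipal).mp hW
  obtain ⟨u, rfl⟩ := Submodule.IsPrincipal.principal W
  choose v hv using fun j => Submodule.mem_span_singleton.mp (hP j)
  refine ⟨u, v, ext fun i j => ?_⟩
  rw [vecMulVec_apply, mul_comm, ← smul_eq_mul, ← Pi.smul_apply, hv j, col_apply]

theorem eventually_pos_add_smul {𝕜 : Type*} [Field 𝕜] [LinearOrder 𝕜] [IsStrictOrderedRing 𝕜]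
    [Finite m] [Finite n] (X Q : Matrix m n 𝕜) (hQ : ∀ i j, 0 < Q i j) :
    ∀ᶠ t : 𝕜 in atTop, ∀ i j, 0 < (X + t • Q) i j := by
  simp only [eventually_all]
  intro i j
  have : Tendsto (fun t : 𝕜 => X i j + t * Q i j) atTop atTop :=
    tendsto_atTop_add_const_left _ _ ((tendsto_id (α := 𝕜)).atTop_mul_const (hQ i j))
  simpa using this.eventually_gt_atTop 0

variable [Fintype n]

theorem dotProduct_eq_one_of_vecMulVec_mul_self {u v : n → K}
    (h : vecMulVec u v * vecMulVec u v = vecMulVec u v) (h0 : vecMulVec u v ≠ 0) :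
    v ⬝ᵥ u = 1 := by
  rw [vecMulVec_mul_vecMulVec, vecMulVec_smul] at h
  exact smul_left_injective K h0 (h.trans (one_smul K _).symm)

variable [DecidableEq n]

theorem exists_eq_vecMulVec_of_mul_eq_smul {A P : Matrix n n K} {μ : K}
    (hμ : A.charpoly.rootMultiplicity μ ≤ 1) (hAP : A * P = μ • P) :
    ∃ u v, P = vecMulVec u v := by
  refine exists_eq_vecMulVec_of_col_mem ((A.toLin'.finrank_eigenspace_le μ).trans ?_) P
    fun j => ?_
  · rwa [charpoly_toLin']
  · rw [Module.End.mem_eigenspace_iff, toLin'_apply, ← mulVec_single_one, mulVec_mulVec, hAP,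
      smul_mulVec]

theorem exists_isUnit_det_mulVec_one_eq {u : n → K} (hu : u ≠ 0) :
    ∃ C : Matrix n n K, IsUnit C.det ∧ C *ᵥ 1 = u := by
  obtain ⟨i, hi⟩ := Function.ne_iff.mp hu
  refine ⟨1 + vecMulVec (u - 1) (Pi.single i 1), ?_, ?_⟩
  · rw [vecMulVec_eq Unit, det_one_add_replicateCol_mul_replicateRow, single_dotProduct]
    simpa using hi
  · simp [add_mulVec, vecMulVec_mulVec, single_dotProduct]

theorem exists_isUnit_det_mulVec_one_eq_and_vecMul_eq {u v z : n → K} (hvu : v ⬝ᵥ u = 1)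
    (hz : z ⬝ᵥ 1 = 1) : ∃ C : Matrix n n K, IsUnit C.det ∧ C *ᵥ 1 = u ∧ v ᵥ* C = z := by
  obtain ⟨C₁, hC₁, hC₁u⟩ := exists_isUnit_det_mulVec_one_eq (u := u) (by rintro rfl; simp at hvu)
  have hv₁ : (v ᵥ* C₁) ⬝ᵥ 1 = 1 := by rw [← dotProduct_mulVec, hC₁u, hvu]
  refine ⟨C₁ * (1 + vecMulVec 1 (z - v ᵥ* C₁)), ?_, ?_, ?_⟩
  · rw [det_mul, vecMulVec_eq Unit, det_one_add_replicateCol_mul_replicateRow, sub_dotProduct,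
      hz, hv₁, sub_self, add_zero, mul_one]
    exact hC₁
  · rw [← mulVec_mulVec, add_mulVec, one_mulVec, vecMulVec_mulVec, sub_dotProduct, hz, hv₁,
      sub_self, MulOpposite.op_zero, zero_smul, add_zero, hC₁u]
  · rw [← vecMul_vecMul, vecMul_add, vecMul_one, vecMul_vecMulVec, hv₁, one_smul,
      add_sub_cancel]

theorem inv_mul_vecMulVec_mul {C : Matrix n n K} (hC : IsUnit C.det) {u v w z : n → K}
    (hw : C *ᵥ w = u) (hz : v ᵥ* C = z) : C⁻¹ * vecMulVec u v * C = vecMulVec w z := by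
  rw [Matrix.mul_assoc, vecMulVec_mul, hz, mul_vecMulVec, ← hw, mulVec_mulVec,
    nonsing_inv_mul _ hC, one_mulVec]

theorem adjoin_inv_mul_mul_eq {C : Matrix n n K} (hC : IsUnit C.det) {X Y : Matrix n n K}
    (h : Algebra.adjoin K {X} = Algebra.adjoin K {Y}) :
    Algebra.adjoin K {C⁻¹ * X * C} = Algebra.adjoin K {C⁻¹ * Y * C} := by
  obtain ⟨U, rfl⟩ := C.isUnit_iff_isUnit_det.mpr hC
  let e := MulSemiringAction.toAlgEquiv K (Matrix n n K) (ConjAct.toConjAct U⁻¹)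
  have he : ∀ X, e X = (U : Matrix n n K)⁻¹ * X * U := fun X => by
    rw [← coe_units_inv]
    rfl
  have := congrArg (Subalgebra.map e.toAlgHom) h
  rwa [AlgHom.map_adjoin_singleton, AlgHom.map_adjoin_singleton, AlgEquiv.toAlgHom_apply,
    AlgEquiv.toAlgHom_apply, he, he] at this

end Matrix

/-- If `A ∈ Mₙ(ℝ)` has a simple real eigenvalue, then the unital algebra `⟨A⟩` is,
up to similarity, generated by a single entrywise strictly positive matrix. -/
theorem stmt6 (n : ℕ) (A : Matrix (Fin n) (Fin n) ℝ)
    (hev : ∃ lam : ℝ, (Matrix.charpoly A).rootMultiplicity lam = 1) :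
    ∃ C : Matrix (Fin n) (Fin n) ℝ, IsUnit C.det ∧
      ∃ B : Matrix (Fin n) (Fin n) ℝ, (∀ i j, 0 < B i j) ∧
        Algebra.adjoin ℝ {B} = Algebra.adjoin ℝ {C⁻¹ * A * C} := by
  obtain ⟨μ, hμ⟩ := hev
  obtain ⟨g, hA, hgμ⟩ :=
    A.charpoly.exists_eq_pow_rootMultiplicity_mul_and_not_dvd A.charpoly_monic.ne_zero μ
  rw [hμ, pow_one] at hA
  rw [dvd_iff_isRoot] at hgμ
  have ha : aeval A ((X - C μ) * g) = 0 := hA ▸ aeval_self_charpoly A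
  have hμA : μ ∈ spectrum ℝ A := mem_spectrum_of_isRoot_charpoly (by simp [hA])
  obtain ⟨u, v, hP⟩ := exists_eq_vecMulVec_of_mul_eq_smul hμ.le (mul_spectralProj ha)
  have hvu : v ⬝ᵥ u = 1 := dotProduct_eq_one_of_vecMulVec_mul_self
    (hP ▸ spectralProj_mul_self ha hgμ) (hP ▸ spectralProj_ne_zero hgμ hμA)
  have hn : 0 < n := Nat.pos_of_ne_zero (by rintro rfl; simp at hvu)
  obtain ⟨C, hC, hCu, hvC⟩ := exists_isUnit_det_mulVec_one_eq_and_vecMul_eq hvu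
    (z := fun _ => (n : ℝ)⁻¹) (by simp [dotProduct, hn.ne'])
  have hpos := eventually_pos_add_smul (C⁻¹ * A * C) (vecMulVec 1 fun _ => (n : ℝ)⁻¹)
    (by simp [vecMulVec_apply, hn])
  have hroot := (tendsto_atTop_add_const_left atTop μ tendsto_id).eventually
    (eventually_atTop_not_isRoot g (by rintro rfl; simp at hgμ))
  obtain ⟨t, hBpos, ht⟩ := (hpos.and hroot).exists
  refine ⟨C, hC, C⁻¹ * (A + t • spectralProj A μ g) * C, ?_,
    adjoin_inv_mul_mul_eq hC (adjoin_add_smul_spectralProj ha hgμ ht)⟩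
  rwa [mul_add, add_mul, mul_smul_comm, smul_mul_assoc, hP, inv_mul_vecMulVec_mul hC hCu hvC]
end

section
/- Let 𝒜 ⊆ M_n(ℝ) be a unital matrix algebra, n ≥ 2. If 𝒜 contains a matrix with a real eigenvalue of algebraic multiplicity 1, then 𝒜 contains an idempotent matrix of rank 1. -/
/-!
Factor the characteristic polynomial as `χ_A = (X - λ) g` with `g(λ) ≠ 0`. Then `X - λ` and `g`
are coprime, and a Bézout relation `u (X - λ) + v g = 1` makes `E = (v g)(A)`, a polynomial in
`A` and hence an element of `𝒜`, the spectral projection of `A` onto its `λ`-eigenspace: it is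
idempotent because `((X - λ) g)(A) = χ_A(A) = 0`, and its range is `ker (A - λ)`. That eigenspace
is nonzero and has dimension at most the algebraic multiplicity `1`.
-/

open Polynomial

section SpectralProjection

variable {R : Type*} [CommRing R] {p q u v : R[X]}

theorem isIdempotentElem_aeval_mul_of_add_eq_one {S : Type*} [Ring S] [Algebra R S] {a : S}
    (huv : u * p + v * q = 1) (hpq : aeval a (p * q) = 0) :
    IsIdempotentElem (aeval a (v * q)) := by
  have hsq : v * q * (v * q) = v * q - u * v * (p * q) := by linear_combination (v * q) * huv
  rw [IsIdempotentElem, ← map_mul, hsq, map_sub, map_mul _ (u * v), hpq, mul_zero, sub_zero]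

theorem range_aeval_mul_eq_ker_aeval_of_add_eq_one {M : Type*} [AddCommGroup M] [Module R M]
    {f : Module.End R M} (huv : u * p + v * q = 1) (hpq : aeval f (p * q) = 0) :
    LinearMap.range (aeval f (v * q)) = LinearMap.ker (aeval f p) := by
  apply le_antisymm
  · rintro _ ⟨x, rfl⟩
    rw [LinearMap.mem_ker, ← Module.End.mul_apply, ← map_mul, mul_left_comm, map_mul, hpq,
      mul_zero, LinearMap.zero_apply]
  · intro x hx
    refine ⟨x, ?_⟩
    have hx_eq : aeval f (u * p + v * q) x = x := by rw [huv, map_one, Module.End.one_apply]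
    rwa [map_add, LinearMap.add_apply, map_mul, Module.End.mul_apply, LinearMap.mem_ker.1 hx,
      map_zero, zero_add] at hx_eq

end SpectralProjection

theorem Polynomial.exists_eq_X_sub_C_mul_isCoprime_of_rootMultiplicity_eq_one {K : Type*}
    [Field K] {p : K[X]} {μ : K} (hp : p ≠ 0) (h : p.rootMultiplicity μ = 1) :
    ∃ g : K[X], p = (X - C μ) * g ∧ IsCoprime (X - C μ) g := by
  obtain ⟨g, hfac, hndvd⟩ := exists_eq_pow_rootMultiplicity_mul_and_not_dvd p hp μ
  exact ⟨g, by rwa [h, pow_one] at hfac, (irreducible_X_sub_C μ).coprime_iff_not_dvd.2 hndvd⟩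

theorem Module.End.ker_aeval_X_sub_C {K M : Type*} [CommRing K] [AddCommGroup M] [Module K M]
    (f : Module.End K M) (μ : K) : LinearMap.ker (aeval f (X - C μ)) = f.eigenspace μ := by
  simp [eigenspace_def, Algebra.algebraMap_eq_smul_one]

theorem LinearMap.finrank_eigenspace_eq_one {K M : Type*} [Field K] [AddCommGroup M]
    [Module K M] [FiniteDimensional K M] {f : Module.End K M} {μ : K}
    (h : f.charpoly.rootMultiplicity μ = 1) : Module.finrank K (f.eigenspace μ) = 1 := by
  refine le_antisymm (h ▸ f.finrank_eigenspace_le μ) ?_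
  have hroot : f.charpoly.IsRoot μ := (rootMultiplicity_pos f.charpoly_monic.ne_zero).1 (by omega)
  exact Submodule.one_le_finrank_iff.2
    (Module.End.hasEigenvalue_iff.1 ((f.hasEigenvalue_iff_isRoot_charpoly μ).2 hroot))

theorem stmt7_general (n : ℕ) (𝒜 : Subalgebra ℝ (Matrix (Fin n) (Fin n) ℝ))
    (hev : ∃ A ∈ 𝒜, ∃ lam : ℝ, (Matrix.charpoly A).rootMultiplicity lam = 1) :
    ∃ E ∈ 𝒜, E * E = E ∧ Matrix.rank E = 1 := by
  obtain ⟨A, hA, lam, hmult⟩ := hev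
  obtain ⟨g, hfac, u, v, huv⟩ :=
    exists_eq_X_sub_C_mul_isCoprime_of_rootMultiplicity_eq_one A.charpoly_monic.ne_zero hmult
  set f := Matrix.toLin' A
  have htoLin (r : ℝ[X]) : Matrix.toLin' (aeval A r) = aeval f r :=
    (aeval_algHom_apply Matrix.toLinAlgEquiv' A r).symm
  have hf : f.charpoly = A.charpoly := Matrix.charpoly_toLin' A
  have hA0 : aeval A ((X - C lam) * g) = 0 := hfac ▸ Matrix.aeval_self_charpoly A
  have hf0 : aeval f ((X - C lam) * g) = 0 := hfac ▸ hf ▸ f.aeval_self_charpoly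
  refine ⟨aeval A (v * g), by simpa using (aeval (⟨A, hA⟩ : 𝒜) (v * g)).2,
    isIdempotentElem_aeval_mul_of_add_eq_one huv hA0, ?_⟩
  rw [Matrix.rank, ← Matrix.toLin'_apply', htoLin,
    range_aeval_mul_eq_ker_aeval_of_add_eq_one huv hf0, Module.End.ker_aeval_X_sub_C,
    LinearMap.finrank_eigenspace_eq_one (hf ▸ hmult)]

/-- If a unital matrix algebra `𝒜 ⊆ Mₙ(ℝ)`, `n ≥ 2`, contains a matrix with a real
eigenvalue of algebraic multiplicity `1`, then `𝒜` contains a rank-one idempotent. -/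
theorem stmt7 (n : ℕ) (hn : 2 ≤ n) (𝒜 : Subalgebra ℝ (Matrix (Fin n) (Fin n) ℝ))
    (hev : ∃ A ∈ 𝒜, ∃ lam : ℝ, (Matrix.charpoly A).rootMultiplicity lam = 1) :
    ∃ E ∈ 𝒜, E * E = E ∧ Matrix.rank E = 1 :=
  stmt7_general n 𝒜 hev
end

section
/- Let 𝒜 ⊆ M_n(ℝ) be a unital matrix algebra. If there is an invertible real matrix C and an index l with the property that E_{ll} ∈ C^{-1}𝒜C (where E_{ll} is a diagonal matrix unit), then 𝒜 is similar to a unital algebra generated by entrywise strictly positive matrices. -/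
/-!
A subalgebra of `M_n(ℝ)` containing one entrywise positive matrix `Q` is generated by its
entrywise positive elements: for any `B` in it, `Q + ε • B` is still positive for small `ε > 0`,
and `B = ε⁻¹ • ((Q + ε • B) - Q)`. It therefore suffices to conjugate `E_{ll}` to a positive
matrix. Writing `E_{ll} = e eᵀ` with `e = Pi.single l 1`, the conjugate `P⁻¹ E_{ll} P` equals
`(P⁻¹ e) (eᵀ P)`, so any invertible `P` with `P 𝟙 = e` and `eᵀ P = n⁻¹ 𝟙ᵀ` turns `E_{ll}` into
the constant matrix `n⁻¹`; such a `P` is a product of two unipotent rank-one updates of `1`.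
-/

open Matrix Filter Topology

namespace Matrix

variable {K m : Type*} [Field K] [Fintype m] [DecidableEq m]

theorem det_one_add_vecMulVec (u v : m → K) : (1 + vecMulVec u v).det = 1 + v ⬝ᵥ u := by
  rw [vecMulVec_eq Unit, det_one_add_replicateCol_mul_replicateRow]

theorem det_one_sub_vecMulVec (u v : m → K) : (1 - vecMulVec u v).det = 1 - v ⬝ᵥ u := by
  rw [sub_eq_add_neg, ← neg_vecMulVec, det_one_add_vecMulVec, dotProduct_neg, sub_eq_add_neg]

theorem exists_isUnit_det_mulVec_one_eq_single [CharZero K] (l : m) :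
    ∃ P : Matrix m m K, IsUnit P.det ∧ P *ᵥ 1 = Pi.single l 1 ∧
      Pi.single l 1 ᵥ* P = (Fintype.card m : K)⁻¹ • 1 := by
  have : Nonempty m := ⟨l⟩
  set e : m → K := Pi.single l 1
  set f : m → K := 1 - e
  set c : K := (Fintype.card m : K)⁻¹
  have hc : c * Fintype.card m = 1 := inv_mul_cancel₀ (by simp [Fintype.card_ne_zero])
  have hef : e + f = 1 := add_sub_cancel e 1
  have hee : e ⬝ᵥ e = 1 := by simp [e]
  have hfe : f ⬝ᵥ e = 0 := by simp [f, e]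
  have hff : f ⬝ᵥ f = (Fintype.card m : K) - 1 := by
    simp [f, e, dotProduct, mul_sub, Pi.single_apply, Finset.sum_sub_distrib]
  refine ⟨(1 + vecMulVec e (c • f)) * (1 - vecMulVec f e), ?_, ?_, ?_⟩
  · simp [det_mul, det_one_add_vecMulVec, det_one_sub_vecMulVec, hfe, dotProduct_comm e,
      -vecMulVec_smul]
  · have hA : (1 - vecMulVec f e) *ᵥ 1 = e := by
      simp [sub_mulVec, vecMulVec_mulVec, e, f]
    have hB : (1 + vecMulVec e (c • f)) *ᵥ e = e := by
      simp [add_mulVec, vecMulVec_mulVec, hfe, -vecMulVec_smul]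
    rw [← mulVec_mulVec, hA, hB]
  · have hB : e ᵥ* (1 + vecMulVec e (c • f)) = e + c • f := by
      rw [vecMul_add, vecMul_one, vecMul_vecMulVec, hee, one_smul]
    have hA : (e + c • f) ᵥ* (1 - vecMulVec f e) = c • 1 := by
      rw [vecMul_sub, vecMul_one, vecMul_vecMulVec, add_dotProduct, smul_dotProduct, hff,
        dotProduct_comm e, hfe, ← hef]
      linear_combination (norm := module) -(hc • e)
    rw [← vecMul_vecMul, hB, hA]

theorem exists_isUnit_det_inv_mul_single_mul_eq_const [CharZero K] (l : m) :
    ∃ P : Matrix m m K, IsUnit P.det ∧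
      P⁻¹ * single l l 1 * P = of fun _ _ => (Fintype.card m : K)⁻¹ := by
  obtain ⟨P, hP, hP1, hlP⟩ := exists_isUnit_det_mulVec_one_eq_single (K := K) l
  refine ⟨P, hP, ?_⟩
  have hintertwine : single l l 1 * P = P * vecMulVec 1 ((Fintype.card m : K)⁻¹ • 1) := by
    rw [single_eq_single_vecMulVec_single, vecMulVec_mul, hlP, mul_vecMulVec, hP1]
  rw [Matrix.mul_assoc, hintertwine, nonsing_inv_mul_cancel_left _ _ hP]
  ext
  simp

end Matrix

namespace Subalgebra

variable {K m : Type*} [Field K] [Fintype m] [DecidableEq m]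

noncomputable def conjByMatrix (𝒜 : Subalgebra K (Matrix m m K)) {D : Matrix m m K}
    (hD : IsUnit D.det) : Subalgebra K (Matrix m m K) :=
  𝒜.map (MulSemiringAction.toAlgEquiv K _ (ConjAct.toConjAct (D.nonsingInvUnit hD)⁻¹)).toAlgHom

theorem mem_conjByMatrix {𝒜 : Subalgebra K (Matrix m m K)} {D : Matrix m m K}
    (hD : IsUnit D.det) {X : Matrix m m K} :
    X ∈ 𝒜.conjByMatrix hD ↔ ∃ Y ∈ 𝒜, X = D⁻¹ * Y * D := by
  simp only [conjByMatrix, mem_map, eq_comm]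
  rfl

theorem adjoin_setOf_pos_eq {ℬ : Subalgebra ℝ (Matrix m m ℝ)} {Q : Matrix m m ℝ} (hQ : Q ∈ ℬ)
    (hQpos : ∀ i j, 0 < Q i j) : Algebra.adjoin ℝ {M | M ∈ ℬ ∧ ∀ i j, 0 < M i j} = ℬ := by
  refine le_antisymm (Algebra.adjoin_le fun M hM => hM.1) fun B hB => ?_
  have hnear : ∀ᶠ ε in 𝓝 (0 : ℝ), ∀ i j, 0 < (Q + ε • B) i j := by
    simp only [eventually_all, Matrix.add_apply, Matrix.smul_apply, smul_eq_mul]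
    intro i j
    refine Tendsto.eventually_const_lt (hQpos i j) ?_
    have hcont : Continuous fun ε : ℝ => Q i j + ε * B i j := by fun_prop
    simpa using hcont.tendsto 0
  obtain ⟨ε, hpos, hε⟩ := ((hnear.filter_mono nhdsWithin_le_nhds).and
    (eventually_mem_nhdsWithin (s := Set.Ioi 0))).exists
  have hdiff : B = ε⁻¹ • ((Q + ε • B) - Q) := by
    rw [add_sub_cancel_left, smul_smul, inv_mul_cancel₀ (ne_of_gt hε), one_smul]
  rw [hdiff]
  refine smul_mem _ (sub_mem (Algebra.subset_adjoin ?_) (Algebra.subset_adjoin ?_)) _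
  exacts [⟨add_mem hQ (smul_mem _ hB ε), hpos⟩, ⟨hQ, hQpos⟩]

end Subalgebra

/-- If some conjugate of a unital matrix algebra `𝒜` contains a diagonal matrix unit
`E_{ll}`, then `𝒜` is similar to an algebra generated by entrywise strictly positive
matrices. -/
theorem stmt8 (n : ℕ) (𝒜 : Subalgebra ℝ (Matrix (Fin n) (Fin n) ℝ))
    (h : ∃ C : Matrix (Fin n) (Fin n) ℝ, IsUnit C.det ∧ ∃ l : Fin n,
      ∃ X ∈ 𝒜, C⁻¹ * X * C = Matrix.single l l (1 : ℝ)) :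
    ∃ D : Matrix (Fin n) (Fin n) ℝ, IsUnit D.det ∧
      ∃ S : Set (Matrix (Fin n) (Fin n) ℝ), (∀ B ∈ S, ∀ i j, 0 < B i j) ∧
        ∀ X, X ∈ Algebra.adjoin ℝ S ↔ ∃ Y ∈ 𝒜, X = D⁻¹ * Y * D := by
  obtain ⟨C, hC, l, X, hX, hXE⟩ := h
  obtain ⟨P, hP, hPE⟩ := exists_isUnit_det_inv_mul_single_mul_eq_const (K := ℝ) l
  have hD : IsUnit (C * P).det := by rw [det_mul]; exact hC.mul hP
  have hQ : (C * P)⁻¹ * X * (C * P) ∈ 𝒜.conjByMatrix hD :=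
    (Subalgebra.mem_conjByMatrix hD).2 ⟨X, hX, rfl⟩
  have hQpos : ∀ i j, 0 < ((C * P)⁻¹ * X * (C * P)) i j := by
    have hconj : (C * P)⁻¹ * X * (C * P) = P⁻¹ * (C⁻¹ * X * C) * P := by
      simp only [Matrix.mul_inv_rev, Matrix.mul_assoc]
    simp [hconj, hXE, hPE, l.pos]
  refine ⟨C * P, hD, {M | M ∈ 𝒜.conjByMatrix hD ∧ ∀ i j, 0 < M i j}, fun B hB => hB.2,
    fun Y => ?_⟩
  rw [Subalgebra.adjoin_setOf_pos_eq hQ hQpos, Subalgebra.mem_conjByMatrix]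
end

section
/- Let 𝒜 ⊆ M_n(ℝ) be a unital subalgebra and suppose 𝒜 is irreducible (its only invariant subspaces of ℝ^n are {0} and ℝ^n) and contains a matrix of rank 1. Then 𝒜 = M_n(ℝ). -/
/-!
Write the rank-one element of `𝒜` as `u vᵀ`. Irreducibility forces `𝒜 u = ℝⁿ`, since `𝒜 u` is an
invariant subspace containing `u`, and dually `vᵀ 𝒜 = ℝⁿ`, since its annihilator
`{x | vᵀ C x = 0 for all C ∈ 𝒜}` is a proper invariant subspace. Hence every rank-one matrix
`x yᵀ = B (u vᵀ) C` with `B, C ∈ 𝒜` lies in `𝒜`, and these span all matrices.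
-/

open Matrix

theorem Matrix.exists_eq_vecMulVec_of_rank_eq_one {K m n : Type*} [Field K] [Fintype n]
    [DecidableEq n] {A : Matrix m n K} (hA : A.rank = 1) :
    ∃ u v, u ≠ 0 ∧ v ≠ 0 ∧ A = vecMulVec u v := by
  obtain ⟨u, hu, hspan⟩ := finrank_eq_one_iff'.mp hA
  have hcol (j : n) : ∃ c : K, c • (u : m → K) = A.col j := by
    obtain ⟨c, hc⟩ := hspan ⟨A *ᵥ Pi.single j 1, Pi.single j 1, rfl⟩
    exact ⟨c, by simpa [mulVec_single_one] using congrArg Subtype.val hc⟩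
  choose v hv using hcol
  have hAuv : A = vecMulVec u v := by
    ext i j
    simpa [vecMulVec_apply, mul_comm] using (congrFun (hv j) i).symm
  refine ⟨u, v, by simpa using hu, ?_, hAuv⟩
  rintro rfl
  have hA0 : A = 0 := by ext; simp [hAuv, vecMulVec_apply]
  simp [hA0] at hA

theorem Subalgebra.eq_top_of_forall_vecMulVec_mem {R ι : Type*} [CommSemiring R] [Fintype ι]
    [DecidableEq ι] (𝒜 : Subalgebra R (Matrix ι ι R)) (h : ∀ x y, vecMulVec x y ∈ 𝒜) :
    𝒜 = ⊤ := by
  refine eq_top_iff.mpr fun M _ => ?_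
  rw [matrix_eq_sum_single M]
  refine sum_mem fun i _ => sum_mem fun j _ => ?_
  have hsingle : single i j (M i j) = vecMulVec (Pi.single i (M i j)) (Pi.single j 1) := by
    ext k l
    by_cases hk : k = i <;> by_cases hl : l = j <;> simp [vecMulVec_apply, hk, hl, Ne.symm]
  rw [hsingle]
  exact h _ _

variable {K ι : Type*} [Field K] [Fintype ι] [DecidableEq ι]

theorem Submodule.eq_top_of_forall_dotProduct_eq_zero {U : Submodule K (ι → K)}
    (hU : ∀ x, (∀ y ∈ U, y ⬝ᵥ x = 0) → x = 0) : U = ⊤ := by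
  rw [← Submodule.dualAnnihilator_eq_bot_iff, Submodule.eq_bot_iff]
  intro f hf
  obtain ⟨x, rfl⟩ := (dotProductEquiv K ι).surjective f
  suffices x = 0 by rw [this, map_zero]
  refine hU x fun y hy => ?_
  rw [dotProduct_comm]
  exact (Submodule.mem_dualAnnihilator _).mp hf y hy

namespace Subalgebra

variable (𝒜 : Subalgebra K (Matrix ι ι K))
  (hirr : ∀ V : Submodule K (ι → K), (∀ A ∈ 𝒜, ∀ v ∈ V, A *ᵥ v ∈ V) → V = ⊥ ∨ V = ⊤)
include hirr

theorem exists_mem_mulVec_eq {u : ι → K} (hu : u ≠ 0) (x : ι → K) :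
    ∃ B ∈ 𝒜, B *ᵥ u = x := by
  let V := 𝒜.toSubmodule.map ((mulVecBilin K K).flip u)
  have hV : V = ⊤ := by
    refine (hirr V ?_).resolve_left fun hV => hu ?_
    · rintro A hA _ ⟨B, hB, rfl⟩
      exact ⟨A * B, 𝒜.mul_mem hA hB, (mulVec_mulVec u A B).symm⟩
    · have : u ∈ V := ⟨1, 𝒜.one_mem, one_mulVec u⟩
      simpa [hV] using this
  obtain ⟨B, hB, hBx⟩ : x ∈ V := hV ▸ Submodule.mem_top
  exact ⟨B, hB, hBx⟩

theorem exists_mem_vecMul_eq {v : ι → K} (hv : v ≠ 0) (y : ι → K) :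
    ∃ C ∈ 𝒜, v ᵥ* C = y := by
  let U := 𝒜.toSubmodule.map (vecMulBilin K K v)
  suffices hU : U = ⊤ by
    obtain ⟨C, hC, hCy⟩ : y ∈ U := hU ▸ Submodule.mem_top
    exact ⟨C, hC, hCy⟩
  let V : Submodule K (ι → K) :=
    ⨅ C ∈ 𝒜, LinearMap.ker (dotProductEquiv K ι v ∘ₗ C.mulVecLin)
  have mem_V (x) : x ∈ V ↔ ∀ C ∈ 𝒜, v ⬝ᵥ C *ᵥ x = 0 := by simp [V]
  have hV : V = ⊥ := by
    refine (hirr V ?_).resolve_right fun hV => hv ?_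
    · intro A hA x hx
      rw [mem_V] at hx ⊢
      intro C hC
      rw [mulVec_mulVec]
      exact hx _ (𝒜.mul_mem hC hA)
    · refine (dotProductEquiv K ι).map_eq_zero_iff.mp (LinearMap.ext fun x => ?_)
      simpa using (mem_V x).mp (hV ▸ Submodule.mem_top) 1 𝒜.one_mem
  refine Submodule.eq_top_of_forall_dotProduct_eq_zero fun x hx => ?_
  rw [← Submodule.mem_bot K, ← hV, mem_V]
  intro C hC
  rw [dotProduct_mulVec]
  exact hx _ ⟨C, hC, rfl⟩

theorem vecMulVec_mem_of_vecMulVec_mem {u v : ι → K} (huv : vecMulVec u v ∈ 𝒜) (hu : u ≠ 0)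
    (hv : v ≠ 0) (x y : ι → K) : vecMulVec x y ∈ 𝒜 := by
  obtain ⟨B, hB, rfl⟩ := exists_mem_mulVec_eq 𝒜 hirr hu x
  obtain ⟨C, hC, rfl⟩ := exists_mem_vecMul_eq 𝒜 hirr hv y
  rw [← mul_vecMulVec, ← vecMulVec_mul, ← Matrix.mul_assoc]
  exact 𝒜.mul_mem (𝒜.mul_mem hB huv) hC

end Subalgebra

theorem stmt11_general (n : ℕ) (𝒜 : Subalgebra ℝ (Matrix (Fin n) (Fin n) ℝ))
    (hirr : ∀ V : Submodule ℝ (Fin n → ℝ),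
      (∀ A ∈ 𝒜, ∀ v ∈ V, A.mulVec v ∈ V) → V = ⊥ ∨ V = ⊤)
    (hrk : ∃ A ∈ 𝒜, Matrix.rank A = 1) :
    𝒜 = ⊤ := by
  obtain ⟨A, hA, hrank⟩ := hrk
  obtain ⟨u, v, hu, hv, rfl⟩ := exists_eq_vecMulVec_of_rank_eq_one hrank
  exact 𝒜.eq_top_of_forall_vecMulVec_mem (𝒜.vecMulVec_mem_of_vecMulVec_mem hirr hA hu hv)

/-- Generalized Burnside theorem over ℝ: an irreducible subalgebra of `Mₙ(ℝ)` containing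
a matrix of rank one is all of `Mₙ(ℝ)`. -/
theorem stmt11 (n : ℕ) (hn : 0 < n) (𝒜 : Subalgebra ℝ (Matrix (Fin n) (Fin n) ℝ))
    (hirr : ∀ V : Submodule ℝ (Fin n → ℝ),
      (∀ A ∈ 𝒜, ∀ v ∈ V, A.mulVec v ∈ V) → V = ⊥ ∨ V = ⊤)
    (hrk : ∃ A ∈ 𝒜, Matrix.rank A = 1) :
    𝒜 = ⊤ :=
  stmt11_general n 𝒜 hirr hrk
end

section
/- For every n ≥ 2 and every integer k with n ≤ k ≤ n(n+1)/2, there exists a set S of positions (i,j) with 1 ≤ i ≤ j ≤ n, containing all diagonal positions (i,i), with |S| = k, such that the linear span of the matrix units {E_{ij} : (i,j) ∈ S} is closed under matrix multiplication (hence is a unital subalgebra of M_n(ℝ) of dimension k). -/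
/-!
Take the diagonal together with `k - n` strictly upper positions forming an initial segment when
ordered by row. If `(i, j)` and `(j, l)` are chosen with `i < j < l`, then `(i, l)` lies in an
earlier row than `(j, l)` and is chosen as well, so the positions form a transitive relation;
since `E i j * E j l = E i l` and all other products of matrix units vanish, the span of the
matrix units of a transitive relation is closed under multiplication.
-/

open Matrix Finset

theorem Finset.exists_subset_card_eq_forall_lt_mem {α β : Type*} [LinearOrder β] (f : α → β)
    (T : Finset α) {m : ℕ} (hm : m ≤ #T) :
    ∃ U ⊆ T, #U = m ∧ ∀ x ∈ U, ∀ y ∈ T, f y < f x → y ∈ U := by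
  classical
  induction m with
  | zero => exact ⟨∅, empty_subset T, card_empty, by simp⟩
  | succ m ih =>
    obtain ⟨U, hUT, hU, hclosed⟩ := ih (by omega)
    have hrest : (T \ U).Nonempty := by
      rw [← card_pos, card_sdiff_of_subset hUT]; omega
    -- adding a least element of `T \ U` keeps the set closed downwards
    obtain ⟨x, hx, hxmin⟩ := exists_min_image (T \ U) f hrest
    rw [mem_sdiff] at hx
    refine ⟨insert x U, insert_subset hx.1 hUT, by rw [card_insert_of_notMem hx.2, hU], ?_⟩
    simp only [mem_insert, forall_eq_or_imp]
    refine ⟨fun y hy hyx => Or.inr ?_, fun z hz y hy hyz => Or.inr (hclosed z hz y hy hyz)⟩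
    by_contra hyU
    exact (hyx.trans_le (hxmin y (mem_sdiff.2 ⟨hy, hyU⟩))).false

theorem Matrix.mul_mem_span_single_of_trans {ι R : Type*} [Fintype ι] [DecidableEq ι]
    [CommSemiring R] {S : Set (ι × ι)} (hS : ∀ p ∈ S, ∀ q ∈ S, p.2 = q.1 → (p.1, q.2) ∈ S)
    {X Y : Matrix ι ι R}
    (hX : X ∈ Submodule.span R ((fun p : ι × ι => single p.1 p.2 (1 : R)) '' S))
    (hY : Y ∈ Submodule.span R ((fun p : ι × ι => single p.1 p.2 (1 : R)) '' S)) :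
    X * Y ∈ Submodule.span R ((fun p : ι × ι => single p.1 p.2 (1 : R)) '' S) := by
  suffices hmul : Submodule.span R ((fun p : ι × ι => single p.1 p.2 (1 : R)) '' S) *
      Submodule.span R ((fun p : ι × ι => single p.1 p.2 (1 : R)) '' S) ≤
      Submodule.span R ((fun p : ι × ι => single p.1 p.2 (1 : R)) '' S) from
    hmul (Submodule.mul_mem_mul hX hY)
  rw [Submodule.span_mul_span, Submodule.span_le]
  rintro _ ⟨_, ⟨p, hp, rfl⟩, _, ⟨q, hq, rfl⟩, rfl⟩
  dsimp only
  by_cases h : p.2 = q.1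
  · obtain ⟨i, j⟩ := p
    obtain ⟨j', l⟩ := q
    obtain rfl : j = j' := h
    rw [single_mul_single_same, one_mul]
    exact Submodule.subset_span ⟨(i, l), hS _ hp _ hq rfl, rfl⟩
  · rw [single_mul_single_of_ne (h := h)]
    exact Submodule.zero_mem _

theorem stmt13_general (n k : ℕ) (hk₁ : n ≤ k) (hk₂ : k ≤ n * (n + 1) / 2) :
    ∃ S : Finset (Fin n × Fin n),
      (∀ p ∈ S, p.1 ≤ p.2) ∧ (∀ i : Fin n, (i, i) ∈ S) ∧ S.card = k ∧
      (∀ X Y : Matrix (Fin n) (Fin n) ℝ,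
        X ∈ Submodule.span ℝ ((fun p : Fin n × Fin n =>
          Matrix.single p.1 p.2 (1 : ℝ)) '' (S : Set (Fin n × Fin n))) →
        Y ∈ Submodule.span ℝ ((fun p : Fin n × Fin n =>
          Matrix.single p.1 p.2 (1 : ℝ)) '' (S : Set (Fin n × Fin n))) →
        X * Y ∈ Submodule.span ℝ ((fun p : Fin n × Fin n =>
          Matrix.single p.1 p.2 (1 : ℝ)) '' (S : Set (Fin n × Fin n)))) := by
  have htriangle : n * (n + 1) / 2 = n + n.choose 2 := by
    have h := Nat.choose_two_right (n + 1)
    rw [Nat.add_sub_cancel, mul_comm, Nat.choose_succ_succ', Nat.choose_one_right] at h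
    exact h.symm
  have hcard : k - n ≤ #{p : Fin n × Fin n | p.1 < p.2} := by
    rw [Fintype.card_product_filter_lt, Fintype.card_fin]; omega
  obtain ⟨U, hUT, hU, hclosed⟩ := exists_subset_card_eq_forall_lt_mem Prod.fst _ hcard
  have hUlt : ∀ p ∈ U, p.1 < p.2 := fun p hp => (mem_filter.1 (hUT hp)).2
  have hdisj : Disjoint (univ : Finset (Fin n)).diag U :=
    disjoint_left.2 fun p hp hpU => (hUlt p hpU).ne (mem_diag.1 hp).2
  refine ⟨univ.diag ∪ U, ?_, fun i => mem_union_left _ (by simp), ?_,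
    fun X Y => mul_mem_span_single_of_trans ?_⟩
  · simp only [mem_union, mem_diag, mem_univ, true_and]
    rintro p (hp | hp)
    exacts [hp.le, (hUlt p hp).le]
  · rw [card_union_of_disjoint hdisj, diag_card, card_univ, Fintype.card_fin, hU]; omega
  · simp only [coe_union, Set.mem_union, mem_coe, mem_diag, mem_univ, true_and]
    rintro ⟨i, j⟩ (hp | hp) ⟨j', l⟩ (hq | hq) (rfl : j = j')
    · exact Or.inl (hp.trans hq)
    · obtain rfl : i = j := hp; exact Or.inr hq
    · obtain rfl : j = l := hq; exact Or.inr hp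
    · exact Or.inr (hclosed _ hq _ (by simpa using (hUlt _ hp).trans (hUlt _ hq)) (hUlt _ hp))

/-- For every `n ≥ 2` and `n ≤ k ≤ n(n+1)/2` there is a set `S` of upper-triangular
positions, containing the diagonal, of cardinality `k`, whose span of matrix units is
closed under multiplication (a matrix incidence algebra of dimension `k`). -/
theorem stmt13 (n k : ℕ) (hn : 2 ≤ n) (hk₁ : n ≤ k) (hk₂ : k ≤ n * (n + 1) / 2) :
    ∃ S : Finset (Fin n × Fin n),
      (∀ p ∈ S, p.1 ≤ p.2) ∧ (∀ i : Fin n, (i, i) ∈ S) ∧ S.card = k ∧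
      (∀ X Y : Matrix (Fin n) (Fin n) ℝ,
        X ∈ Submodule.span ℝ ((fun p : Fin n × Fin n =>
          Matrix.single p.1 p.2 (1 : ℝ)) '' (S : Set (Fin n × Fin n))) →
        Y ∈ Submodule.span ℝ ((fun p : Fin n × Fin n =>
          Matrix.single p.1 p.2 (1 : ℝ)) '' (S : Set (Fin n × Fin n))) →
        X * Y ∈ Submodule.span ℝ ((fun p : Fin n × Fin n =>
          Matrix.single p.1 p.2 (1 : ℝ)) '' (S : Set (Fin n × Fin n)))) :=
  stmt13_general n k hk₁ hk₂
end

section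
/- For every n ≥ 2 and every integer k with n ≤ k ≤ n(n+1)/2, there exist matrices A, B ∈ M_n(ℝ) with A ≥ 0, B ≥ 0, AB − BA ≥ 0 (entrywise), such that the unital subalgebra of M_n(ℝ) generated by A and B has ℝ-dimension equal to k. -/
open Matrix Finset

/-!
Take `A = diag(d)` with distinct entries `d 0 > d 1 > ⋯ ≥ 0` and `B` the `0/1` matrix of a
preorder `r ⊆ (≤)` on `Fin n`. Lagrange interpolation in `A` produces every diagonal matrix unit
`Eᵢᵢ`, and `Eᵢᵢ B Eⱼⱼ = Bᵢⱼ Eᵢⱼ`, so `A` and `B` generate the incidence algebra of `r`, whose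
dimension is the number of pairs in `r`. Moreover `(AB - BA)ᵢⱼ = (dᵢ - dⱼ) Bᵢⱼ ≥ 0`.
For the preorders `i = j ∨ (i < j ∧ i + n j < t)` this number grows in steps of at most one from
`n` (at `t = 0`) to `n(n+1)/2` (at `t = n²`), so it takes every value in between.
-/

namespace Matrix

variable {R K ι : Type*} [CommSemiring R] [Field K] [Fintype ι] [DecidableEq ι]

variable (R) in
def incidenceSubalgebra (r : ι → ι → Prop) [IsPreorder ι r] : Subalgebra R (Matrix ι ι R) where
  carrier := {M | ∀ i j, ¬ r i j → M i j = 0}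
  mul_mem' {M N} hM hN i j hij := by
    refine Finset.sum_eq_zero fun l _ => ?_
    by_cases hil : r i l
    · exact mul_eq_zero_of_right _ (hN l j fun hlj => hij (_root_.trans hil hlj))
    · exact mul_eq_zero_of_left (hM i l hil) _
  add_mem' hM hN i j hij := by simp [hM i j hij, hN i j hij]
  algebraMap_mem' c i j hij := by
    rw [algebraMap_matrix_apply, if_neg fun h : i = j => hij (h ▸ refl_of r i)]

variable {r : ι → ι → Prop} [IsPreorder ι r]

theorem toSubmodule_incidenceSubalgebra :
    Subalgebra.toSubmodule (incidenceSubalgebra R r) =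
      Submodule.span R
        (Set.range fun p : {p : ι × ι // r p.1 p.2} => single p.1.1 p.1.2 (1 : R)) := by
  apply le_antisymm
  · intro M hM
    rw [matrix_eq_sum_single M]
    refine Submodule.sum_mem _ fun i _ => Submodule.sum_mem _ fun j _ => ?_
    by_cases hij : r i j
    · have hE : single i j (1 : R) ∈ Submodule.span R
          (Set.range fun p : {p : ι × ι // r p.1 p.2} => single p.1.1 p.1.2 (1 : R)) :=
        Submodule.subset_span ⟨⟨(i, j), hij⟩, rfl⟩
      simpa [smul_single] using Submodule.smul_mem _ (M i j) hE
    · simp [hM i j hij]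
  · rw [Submodule.span_le]
    rintro _ ⟨⟨⟨i, j⟩, hij⟩, rfl⟩ a b hab
    simp only [single_apply]
    grind

theorem finrank_incidenceSubalgebra [DecidableRel r] :
    Module.finrank K (incidenceSubalgebra K r) = #{p : ι × ι | r p.1 p.2} := by
  rw [← Subalgebra.finrank_toSubmodule, toSubmodule_incidenceSubalgebra, finrank_span_eq_card,
    Fintype.card_subtype]
  have hv : (fun p : ι × ι => single p.1 p.2 (1 : K)) = stdBasis K ι ι :=
    funext fun p => (stdBasis_eq_single K p.1 p.2).symm
  exact (hv ▸ (stdBasis K ι ι).linearIndependent).comp _ Subtype.val_injective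

theorem single_mem_adjoin_diagonal {d : ι → K} (hd : Function.Injective d) (i : ι) :
    single i i 1 ∈ Algebra.adjoin K {diagonal d} := by
  have : Polynomial.aeval (diagonal d) (Lagrange.basis univ d i) = single i i 1 := by
    rw [← diagonal_single, ← diagonalAlgHom_apply K, Polynomial.aeval_algHom_apply,
      Polynomial.aeval_pi_apply, diagonalAlgHom_apply]
    refine congrArg diagonal (funext fun j => ?_)
    rw [Polynomial.coe_aeval_eq_eval, Pi.single_apply]
    split_ifs with hji
    · exact hji ▸ Lagrange.eval_basis_self hd.injOn (mem_univ j)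
    · exact Lagrange.eval_basis_of_ne (Ne.symm hji) (mem_univ j)
  exact this ▸ Polynomial.aeval_mem_adjoin_singleton K _

theorem adjoin_diagonal_eq_incidenceSubalgebra {d : ι → K} (hd : Function.Injective d)
    {B : Matrix ι ι K} (hB : ∀ i j, B i j ≠ 0 ↔ r i j) :
    Algebra.adjoin K {diagonal d, B} = incidenceSubalgebra K r := by
  apply le_antisymm
  · rw [Algebra.adjoin_le_iff, Set.insert_subset_iff, Set.singleton_subset_iff]
    exact ⟨fun i j hij => diagonal_apply_ne d fun h => hij (h ▸ refl_of r i),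
      fun i j hij => not_not.1 (mt (hB i j).1 hij)⟩
  · have hdiag i : single i i (1 : K) ∈ Algebra.adjoin K {diagonal d, B} :=
      Algebra.adjoin_mono (Set.singleton_subset_iff.2 (Set.mem_insert _ _))
        (single_mem_adjoin_diagonal hd i)
    have hBmem : B ∈ Algebra.adjoin K {diagonal d, B} := Algebra.subset_adjoin (by simp)
    refine Subalgebra.toSubmodule.le_iff_le.1 ?_
    rw [toSubmodule_incidenceSubalgebra, Submodule.span_le]
    rintro _ ⟨⟨⟨i, j⟩, hij⟩, rfl⟩
    show single i j (1 : K) ∈ Algebra.adjoin K {diagonal d, B}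
    have hsingle : single i j (1 : K) = (B i j)⁻¹ • (single i i 1 * B * single j j 1) := by
      rw [single_mul_mul_single, one_mul, mul_one, smul_single, smul_eq_mul,
        inv_mul_cancel₀ ((hB i j).2 hij)]
    rw [hsingle]
    exact Subalgebra.smul_mem _ (mul_mem (mul_mem (hdiag i) hBmem) (hdiag j)) _

theorem diagonal_mul_sub_mul_diagonal_apply {α : Type*} [CommRing α] (d : ι → α)
    (B : Matrix ι ι α) (i j : ι) : (diagonal d * B - B * diagonal d) i j = (d i - d j) * B i j := by
  rw [sub_apply, diagonal_mul, mul_diagonal, sub_mul, mul_comm (d j)]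

theorem diagonal_mul_sub_mul_diagonal_nonneg {α : Type*} [CommRing α] [PartialOrder α]
    [IsOrderedRing α] {d : ι → α} {B : Matrix ι ι α} (hB : ∀ i j, 0 ≤ B i j)
    (hd : ∀ i j, B i j ≠ 0 → d j ≤ d i) (i j : ι) : 0 ≤ (diagonal d * B - B * diagonal d) i j := by
  rw [diagonal_mul_sub_mul_diagonal_apply]
  by_cases h : B i j = 0
  · simp [h]
  · exact mul_nonneg (sub_nonneg.2 (hd i j h)) (hB i j)

end Matrix

theorem Nat.exists_eq_of_map_add_one_le {f : ℕ → ℕ} (hf : ∀ t, f (t + 1) ≤ f t + 1) {m T : ℕ}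
    (h0 : f 0 ≤ m) (hT : m ≤ f T) : ∃ t, f t = m := by
  induction T with
  | zero => exact ⟨0, le_antisymm h0 hT⟩
  | succ T ih =>
    by_cases hm : m ≤ f T
    · exact ih hm
    · exact ⟨T + 1, by have := hf T; omega⟩

theorem Fin.card_filter_fst_le_snd (n : ℕ) :
    #{p : Fin n × Fin n | p.1 ≤ p.2} = n * (n + 1) / 2 := by
  rw [Finset.card_filter, Fintype.sum_prod_type_right]
  simp only [← Finset.card_filter, Finset.filter_ge_eq_Iic, Fin.card_Iic]
  have h := Finset.sum_range_succ' (fun i => i) n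
  simp only [add_zero] at h
  rw [Fin.sum_univ_eq_sum_range (· + 1), ← h, Finset.sum_range_id, Nat.add_sub_cancel, mul_comm]

def colexPrefixRel (n t : ℕ) (i j : Fin n) : Prop := i = j ∨ i < j ∧ (i : ℕ) + n * j < t

instance (n t : ℕ) : DecidableRel (colexPrefixRel n t) :=
  fun i j => inferInstanceAs (Decidable (i = j ∨ i < j ∧ (i : ℕ) + n * j < t))

instance (n t : ℕ) : IsPreorder (Fin n) (colexPrefixRel n t) where
  refl _ := Or.inl rfl
  trans i j l := by
    rintro (rfl | ⟨hij, hijt⟩) (rfl | ⟨hjl, hjlt⟩)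
    · exact Or.inl rfl
    · exact Or.inr ⟨hjl, hjlt⟩
    · exact Or.inr ⟨hij, hijt⟩
    · exact Or.inr ⟨hij.trans hjl, by rw [Fin.lt_def] at hij; omega⟩

theorem le_of_colexPrefixRel {n t : ℕ} {i j : Fin n} (h : colexPrefixRel n t i j) : i ≤ j :=
  h.elim le_of_eq fun h => h.1.le

theorem card_colexPrefixRel_zero (n : ℕ) :
    #{p : Fin n × Fin n | colexPrefixRel n 0 p.1 p.2} = n := by
  calc _ = #(univ : Finset (Fin n)).diag := by
        congr 1
        ext p
        simp [colexPrefixRel]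
    _ = n := by rw [diag_card, card_univ, Fintype.card_fin]

theorem card_colexPrefixRel_mul_self (n : ℕ) :
    #{p : Fin n × Fin n | colexPrefixRel n (n * n) p.1 p.2} = n * (n + 1) / 2 := by
  rw [← Fin.card_filter_fst_le_snd]
  congr 1
  refine filter_congr fun p _ => ?_
  have hle : n * p.2 + n ≤ n * n := Nat.mul_le_mul_left n p.2.isLt
  simp only [colexPrefixRel, le_iff_eq_or_lt, Fin.lt_def]
  omega

theorem card_colexPrefixRel_succ_le (n t : ℕ) :
    #{p : Fin n × Fin n | colexPrefixRel n (t + 1) p.1 p.2} ≤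
      #{p : Fin n × Fin n | colexPrefixRel n t p.1 p.2} + 1 := by
  have hsub : (univ.filter fun p : Fin n × Fin n => colexPrefixRel n (t + 1) p.1 p.2) ⊆
      (univ.filter fun p => colexPrefixRel n t p.1 p.2) ∪
        univ.filter fun p => (p.1 : ℕ) + n * p.2 = t := by
    intro p hp
    rw [mem_filter] at hp
    rw [mem_union, mem_filter, mem_filter]
    simp only [colexPrefixRel, mem_univ, true_and, Fin.ext_iff, Fin.lt_def] at hp ⊢
    omega
  have hkey : #{p : Fin n × Fin n | (p.1 : ℕ) + n * p.2 = t} ≤ 1 := by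
    refine Finset.card_le_one.2 fun p hp q hq => Prod.swap_injective (finProdFinEquiv.injective ?_)
    simp only [mem_filter] at hp hq
    ext
    simp [hp.2, hq.2]
  calc _ ≤ _ := card_le_card hsub
    _ ≤ _ := card_union_le _ _
    _ ≤ _ := by gcongr

theorem exists_card_colexPrefixRel_eq {n k : ℕ} (hk₁ : n ≤ k) (hk₂ : k ≤ n * (n + 1) / 2) :
    ∃ t, #{p : Fin n × Fin n | colexPrefixRel n t p.1 p.2} = k :=
  Nat.exists_eq_of_map_add_one_le (card_colexPrefixRel_succ_le n)
    ((card_colexPrefixRel_zero n).trans_le hk₁)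
    (hk₂.trans_eq (card_colexPrefixRel_mul_self n).symm)

theorem stmt14_general (n k : ℕ) (hk₁ : n ≤ k) (hk₂ : k ≤ n * (n + 1) / 2) :
    ∃ A B : Matrix (Fin n) (Fin n) ℝ,
      (∀ i j, 0 ≤ A i j) ∧ (∀ i j, 0 ≤ B i j) ∧
      (∀ i j, 0 ≤ (A * B - B * A) i j) ∧
      Module.finrank ℝ ↥(Algebra.adjoin ℝ {A, B}) = k := by
  obtain ⟨t, ht⟩ := exists_card_colexPrefixRel_eq hk₁ hk₂
  let d : Fin n → ℝ := fun i => (i.rev : ℕ)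
  let B : Matrix (Fin n) (Fin n) ℝ := of fun i j => if colexPrefixRel n t i j then 1 else 0
  have hd : Function.Injective d :=
    Nat.cast_injective.comp (Fin.val_injective.comp Fin.rev_injective)
  have hB : ∀ i j, B i j ≠ 0 ↔ colexPrefixRel n t i j := by simp [B]
  have hBnonneg : ∀ i j, 0 ≤ B i j := fun i j => by
    simp only [B, of_apply]
    split_ifs <;> norm_num
  refine ⟨diagonal d, B, fun i j => ?_, hBnonneg, ?_, ?_⟩
  · rw [diagonal_apply]
    split_ifs <;> positivity
  · refine diagonal_mul_sub_mul_diagonal_nonneg hBnonneg fun i j hij => ?_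
    exact Nat.cast_le.2 (Fin.rev_le_rev.2 (le_of_colexPrefixRel ((hB i j).1 hij)))
  · rw [adjoin_diagonal_eq_incidenceSubalgebra hd hB, finrank_incidenceSubalgebra, ht]

/-- For every `n ≥ 2` and every `k` with `n ≤ k ≤ n(n+1)/2` there are entrywise
nonnegative matrices `A, B ∈ Mₙ(ℝ)` with `AB − BA` entrywise nonnegative such that the
unital algebra generated by `A` and `B` has dimension `k`. -/
theorem stmt14 (n k : ℕ) (hn : 2 ≤ n) (hk₁ : n ≤ k) (hk₂ : k ≤ n * (n + 1) / 2) :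
    ∃ A B : Matrix (Fin n) (Fin n) ℝ,
      (∀ i j, 0 ≤ A i j) ∧ (∀ i j, 0 ≤ B i j) ∧
      (∀ i j, 0 ≤ (A * B - B * A) i j) ∧
      Module.finrank ℝ ↥(Algebra.adjoin ℝ {A, B}) = k :=
  stmt14_general n k hk₁ hk₂
end

section
/- Let T ∈ M_{k₂}(ℝ) be entrywise nonnegative with T_{11} > 0, let k₁ ≥ 1, n = k₁ + k₂, k₂ ≥ 2, and let A = O_{k₁} ⊕ T ∈ M_n(ℝ). Let C = K_{k₁+1} ⊕ I_{k₂−1}, where K_m is the matrix of the conjugation from the paper satisfying K_m^{-1} E_{mm} K_m = (1/m) J_m. Then B = C^{-1} A C is entrywise nonnegative, and if T is entrywise strictly positive then B is entrywise strictly positive. -/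
open Matrix

/-!
Write `b = k₁` as an index of `Fin n`. Since `A` vanishes on the rows and columns before `b`, only
the columns `l ≥ b` of `C⁻¹` and the rows `l ≥ b` of `C` enter `C⁻¹ A C`. Column `l` of `C⁻¹` is the
indicator of `{i | max i b = l}`, and row `l` of `C` is supported on `{j | max j b = l}` with value
`1/(k₁+1)` or `1`. Hence `(C⁻¹ A C) i j = A (max i b) (max j b) · w j` with `w j > 0`, an entry of `T`
times a positive weight.
-/

section KBlock

variable {n : ℕ} (b : Fin n)

/-- `K_{b+1} ⊕ I`, the block `K_{b+1}` sitting on the indices `≤ b`. -/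
noncomputable def kBlock : Matrix (Fin n) (Fin n) ℝ := of fun i j =>
  if i ≤ b ∧ j ≤ b then
    if i < b then (if (j : ℕ) = i + 1 then 1 else 0) - ((b : ℕ) + 1 : ℝ)⁻¹
    else ((b : ℕ) + 1 : ℝ)⁻¹
  else if i = j then 1 else 0

/-- `K_{b+1}⁻¹ ⊕ I`. -/
noncomputable def kBlockInv : Matrix (Fin n) (Fin n) ℝ := of fun i j =>
  if (i : ℕ) = 0 then (if j = b then 1 else if j < b then -1 else 0)
  else if i ≤ b then (if (j : ℕ) + 1 = i ∨ j = b then 1 else 0)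
  else if i = j then 1 else 0

lemma kBlockInv_apply_of_le {i l : Fin n} (hl : b ≤ l) :
    kBlockInv b i l = if max i b = l then 1 else 0 := by
  simp only [kBlockInv, of_apply, Fin.ext_iff, Fin.le_def, Fin.lt_def, max_def] at *
  split_ifs <;> first | rfl | omega

lemma kBlock_apply_of_le {l j : Fin n} (hl : b ≤ l) :
    kBlock b l j = if l = max j b then (if j ≤ b then ((b : ℕ) + 1 : ℝ)⁻¹ else 1) else 0 := by
  simp only [kBlock, of_apply, Fin.ext_iff, Fin.le_def, Fin.lt_def, max_def] at *
  split_ifs <;> first | rfl | omega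

lemma sum_Iic_kBlock (i : Fin n) : ∑ l ∈ Finset.Iic b, kBlock b i l = if i = b then 1 else 0 := by
  rcases lt_trichotomy i b with hib | rfl | hbi
  · let i' : Fin n := ⟨i + 1, by omega⟩
    have hterm : ∀ l ∈ Finset.Iic b,
        kBlock b i l = (if i' = l then 1 else 0) - ((b : ℕ) + 1 : ℝ)⁻¹ := by
      intro l hl
      simp only [Finset.mem_Iic] at hl
      simp only [kBlock, of_apply, hl, hib.le, hib, and_self, if_true, i', Fin.ext_iff, eq_comm]
    rw [Finset.sum_congr rfl hterm, Finset.sum_sub_distrib, Finset.sum_ite_eq, Finset.sum_const,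
      Fin.card_Iic, if_pos (Finset.mem_Iic.mpr (Fin.le_def.mpr (Nat.succ_le_of_lt hib))),
      if_neg hib.ne, nsmul_eq_mul]
    push_cast
    field_simp
    ring
  · have hterm : ∀ l ∈ Finset.Iic i, kBlock i i l = ((i : ℕ) + 1 : ℝ)⁻¹ := by
      intro l hl
      simp only [Finset.mem_Iic] at hl
      simp [kBlock, hl]
    rw [Finset.sum_congr rfl hterm, Finset.sum_const, Fin.card_Iic, nsmul_eq_mul, if_pos rfl]
    push_cast
    field_simp
  · rw [if_neg hbi.ne', Finset.sum_eq_zero]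
    intro l hl
    simp only [Finset.mem_Iic] at hl
    simp [kBlock, hbi.not_ge, (hl.trans_lt hbi).ne']

lemma kBlock_mul_kBlockInv : kBlock b * kBlockInv b = 1 := by
  ext i j
  rcases lt_or_ge j b with hjb | hbj
  · let j' : Fin n := ⟨j + 1, by omega⟩
    let z : Fin n := ⟨0, by omega⟩
    have hcol : ∀ l, kBlockInv b l j = (if j' = l then 1 else 0) - (if z = l then 1 else 0) := by
      intro l
      simp only [kBlockInv, of_apply, j', z, Fin.ext_iff, Fin.le_def, Fin.lt_def] at hjb ⊢
      split_ifs <;> first | omega | norm_num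
    simp only [mul_apply, hcol, mul_sub, mul_ite, mul_one, mul_zero, Finset.sum_sub_distrib,
      Finset.sum_ite_eq, Finset.mem_univ, if_true]
    simp only [kBlock, of_apply, one_apply, j', z, Fin.ext_iff, Fin.le_def, Fin.lt_def] at hjb ⊢
    split_ifs <;> first | omega | contradiction | ring
  · simp only [mul_apply, kBlockInv_apply_of_le b hbj, mul_ite, mul_one, mul_zero]
    rcases hbj.eq_or_lt with rfl | hbj
    · simp only [max_eq_right_iff, ← Finset.sum_filter, Finset.filter_ge_eq_Iic, sum_Iic_kBlock,
        one_apply]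
    · have hmax : ∀ l, max l b = j ↔ l = j := fun l => by
        simp only [max_def]; split_ifs with h
        · exact ⟨fun h' => absurd h' hbj.ne, fun h' => absurd (h' ▸ h) hbj.not_ge⟩
        · rfl
      simp only [hmax, Finset.sum_ite_eq', Finset.mem_univ, if_true, kBlock, of_apply, one_apply,
        hbj.not_ge, and_false, if_false]

lemma kBlockInv_mul_apply {M : Matrix (Fin n) (Fin n) ℝ} (hM : ∀ l j, l < b → M l j = 0)
    (i j : Fin n) : (kBlockInv b * M) i j = M (max i b) j := by
  rw [mul_apply, Finset.sum_eq_single (max i b)]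
  · rw [kBlockInv_apply_of_le b (le_max_right i b), if_pos rfl, one_mul]
  · intro l _ hl
    rcases lt_or_ge l b with hlb | hbl
    · rw [hM l j hlb, mul_zero]
    · rw [kBlockInv_apply_of_le b hbl, if_neg (Ne.symm hl), zero_mul]
  · simp

lemma mul_kBlock_apply {M : Matrix (Fin n) (Fin n) ℝ} (hM : ∀ i l, l < b → M i l = 0)
    (i j : Fin n) :
    (M * kBlock b) i j = M i (max j b) * (if j ≤ b then ((b : ℕ) + 1 : ℝ)⁻¹ else 1) := by
  rw [mul_apply, Finset.sum_eq_single (max j b)]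
  · rw [kBlock_apply_of_le b (le_max_right j b), if_pos rfl]
  · intro l _ hl
    rcases lt_or_ge l b with hlb | hbl
    · rw [hM i l hlb, zero_mul]
    · rw [kBlock_apply_of_le b hbl, if_neg hl, mul_zero]
  · simp

lemma inv_kBlock_mul_mul_kBlock_apply {M : Matrix (Fin n) (Fin n) ℝ}
    (hrow : ∀ l j, l < b → M l j = 0) (hcol : ∀ i l, l < b → M i l = 0) (i j : Fin n) :
    ((kBlock b)⁻¹ * M * kBlock b) i j =
      M (max i b) (max j b) * (if j ≤ b then ((b : ℕ) + 1 : ℝ)⁻¹ else 1) := by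
  have hcol' : ∀ i l, l < b → (kBlockInv b * M) i l = 0 := fun i l hl => by
    rw [kBlockInv_mul_apply b hrow, hcol _ _ hl]
  rw [inv_eq_right_inv (kBlock_mul_kBlockInv b), mul_kBlock_apply b hcol',
    kBlockInv_mul_apply b hrow]

end KBlock

/-- Conjugating `A = O_{k₁} ⊕ T` (with `T ≥ 0`, `T₁₁ > 0`) by `C = K_{k₁+1} ⊕ I_{k₂−1}`
yields a nonnegative matrix `B = C⁻¹ A C`; if moreover `T > 0` then `B > 0`. -/
theorem stmt17 (k₁ k₂ n : ℕ) (hk₂ : 2 ≤ k₂) (hn : n = k₁ + k₂)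
    (T : Matrix (Fin k₂) (Fin k₂) ℝ)
    (hT : ∀ i j, 0 ≤ T i j)
    (A : Matrix (Fin n) (Fin n) ℝ)
    (hA : ∀ i j : Fin n, A i j =
      if h : k₁ ≤ (i : ℕ) ∧ k₁ ≤ (j : ℕ) then
        T ⟨(i : ℕ) - k₁, by omega⟩ ⟨(j : ℕ) - k₁, by omega⟩
      else 0)
    (C : Matrix (Fin n) (Fin n) ℝ)
    (hC : ∀ i j : Fin n, C i j =
      if (i : ℕ) ≤ k₁ ∧ (j : ℕ) ≤ k₁ then
        (if (i : ℕ) < k₁ then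
          (((k₁ : ℝ) + 1) * (if (j : ℕ) = (i : ℕ) + 1 then 1 else 0) - 1) / ((k₁ : ℝ) + 1)
        else 1 / ((k₁ : ℝ) + 1))
      else if k₁ < (i : ℕ) ∧ k₁ < (j : ℕ) then (if i = j then 1 else 0) else 0) :
    (∀ i j, 0 ≤ (C⁻¹ * A * C) i j) ∧
      ((∀ i j, 0 < T i j) → ∀ i j, 0 < (C⁻¹ * A * C) i j) := by
  let b : Fin n := ⟨k₁, by omega⟩
  have hCb : C = kBlock b := by
    ext i j
    rw [hC]
    simp only [kBlock, of_apply, b, Fin.le_def, Fin.lt_def, Fin.ext_iff]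
    split_ifs <;> first | omega | field_simp
  have hrow : ∀ l j, l < b → A l j = 0 := fun l j hl => by
    rw [hA, dif_neg (fun h => Fin.lt_def.mp hl |>.not_ge h.1)]
  have hcol : ∀ i l, l < b → A i l = 0 := fun i l hl => by
    rw [hA, dif_neg (fun h => Fin.lt_def.mp hl |>.not_ge h.2)]
  have hB : ∀ i j, ∃ p q, ∃ w > 0, (C⁻¹ * A * C) i j = T p q * w := by
    intro i j
    rw [hCb, inv_kBlock_mul_mul_kBlock_apply b hrow hcol, hA,
      dif_pos ⟨le_max_right _ _, le_max_right _ _⟩]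
    exact ⟨_, _, _, by split_ifs <;> positivity, rfl⟩
  refine ⟨fun i j => ?_, fun hTpos i j => ?_⟩
  · obtain ⟨p, q, w, hw, h⟩ := hB i j
    exact h ▸ mul_nonneg (hT p q) hw.le
  · obtain ⟨p, q, w, hw, h⟩ := hB i j
    exact h ▸ mul_pos (hTpos p q) hw
end

section
/- Let A = ⨁_{i=1}^k J_{n_i}(λ) ∈ M_n(ℝ) be a direct sum of Jordan blocks all with the same real eigenvalue λ. Then the centralizer C(A) = {X ∈ M_n(ℝ) : AX = XA} contains an entrywise nonnegative matrix R such that for every (i,j), R_{ij} ≠ 0 whenever some matrix in C(A) has nonzero (i,j)-entry (i.e., C(A) has a nonnegative covering matrix). -/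
open Matrix

private lemma sumL {n : ℕ} (lam : ℝ) (A : Matrix (Fin n) (Fin n) ℝ)
    (hdiag : ∀ i : Fin n, A i i = lam)
    (helse : ∀ i j : Fin n, (i : ℕ) ≠ (j : ℕ) → (j : ℕ) ≠ (i : ℕ) + 1 → A i j = 0)
    (f : Fin n → ℝ) (i : Fin n) :
    ∑ k, A i k * f k = lam * f i +
      (if h : (i : ℕ) + 1 < n then A i ⟨(i : ℕ) + 1, h⟩ * f ⟨(i : ℕ) + 1, h⟩ else 0) := by
  by_cases h : (i : ℕ) + 1 < n
  · rw [dif_pos h]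
    have hab : i ≠ (⟨(i : ℕ) + 1, h⟩ : Fin n) := by
      intro hh; apply absurd (congrArg Fin.val hh); simp
    refine (Finset.sum_subset (Finset.subset_univ ({i, ⟨(i : ℕ) + 1, h⟩} : Finset (Fin n))) ?_).symm.trans ?_
    · intro c _ hc
      simp only [Finset.mem_insert, Finset.mem_singleton, not_or] at hc
      have h1 : (i : ℕ) ≠ (c : ℕ) := fun hh => hc.1 (Fin.ext hh.symm)
      have h2 : (c : ℕ) ≠ (i : ℕ) + 1 := fun hh => hc.2 (Fin.ext hh)
      rw [helse i c h1 h2, zero_mul]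
    · rw [Finset.sum_pair hab, hdiag i]
  · rw [dif_neg h, add_zero]
    rw [Fintype.sum_eq_single i ?_, hdiag i]
    intro c hc
    have h1 : (i : ℕ) ≠ (c : ℕ) := fun hh => hc (Fin.ext hh.symm)
    have h2 : (c : ℕ) ≠ (i : ℕ) + 1 := by
      have := c.isLt; omega
    rw [helse i c h1 h2, zero_mul]

private lemma sumR {n : ℕ} (lam : ℝ) (A : Matrix (Fin n) (Fin n) ℝ)
    (hdiag : ∀ i : Fin n, A i i = lam)
    (helse : ∀ i j : Fin n, (i : ℕ) ≠ (j : ℕ) → (j : ℕ) ≠ (i : ℕ) + 1 → A i j = 0)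
    (f : Fin n → ℝ) (j : Fin n) :
    ∑ k, f k * A k j = lam * f j +
      (if h : 0 < (j : ℕ) then
        f ⟨(j : ℕ) - 1, Nat.lt_of_le_of_lt (Nat.sub_le _ _) j.isLt⟩ *
          A ⟨(j : ℕ) - 1, Nat.lt_of_le_of_lt (Nat.sub_le _ _) j.isLt⟩ j else 0) := by
  by_cases h : 0 < (j : ℕ)
  · rw [dif_pos h]
    set b : Fin n := ⟨(j : ℕ) - 1, Nat.lt_of_le_of_lt (Nat.sub_le _ _) j.isLt⟩ with hb
    have hab : j ≠ b := by
      intro hh; apply absurd (congrArg Fin.val hh); simp [hb]; omega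
    refine (Finset.sum_subset (Finset.subset_univ {j, b}) ?_).symm.trans ?_
    · intro c _ hc
      simp only [Finset.mem_insert, Finset.mem_singleton, not_or] at hc
      have h1 : (c : ℕ) ≠ (j : ℕ) := fun hh => hc.1 (Fin.ext hh)
      have h2 : (j : ℕ) ≠ (c : ℕ) + 1 := by
        intro hh
        exact hc.2 (Fin.ext (by simp [hb]; omega))
      rw [helse c j h1 h2, mul_zero]
    · rw [Finset.sum_pair hab, hdiag j, mul_comm]
  · rw [dif_neg h, add_zero]
    rw [Fintype.sum_eq_single j ?_, hdiag j, mul_comm]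
    intro c hc
    have h1 : (c : ℕ) ≠ (j : ℕ) := fun hh => hc (Fin.ext hh)
    have h2 : (j : ℕ) ≠ (c : ℕ) + 1 := by omega
    rw [helse c j h1 h2, mul_zero]

private lemma habs {n : ℕ} (lam : ℝ) (A : Matrix (Fin n) (Fin n) ℝ)
    (hdiag : ∀ i : Fin n, A i i = lam)
    (hsuper : ∀ i j : Fin n, (j : ℕ) = (i : ℕ) + 1 → A i j = 0 ∨ A i j = 1)
    (helse : ∀ i j : Fin n, (i : ℕ) ≠ (j : ℕ) → (j : ℕ) ≠ (i : ℕ) + 1 → A i j = 0)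
    (X : Matrix (Fin n) (Fin n) ℝ) (hX : A * X = X * A) :
    A * X.map (fun x => |x|) = X.map (fun x => |x|) * A := by
  have key : ∀ i j : Fin n,
      (if h : (i : ℕ) + 1 < n then A i ⟨(i : ℕ) + 1, h⟩ * X ⟨(i : ℕ) + 1, h⟩ j else 0) =
      (if h : 0 < (j : ℕ) then
        X i ⟨(j : ℕ) - 1, Nat.lt_of_le_of_lt (Nat.sub_le _ _) j.isLt⟩ *
          A ⟨(j : ℕ) - 1, Nat.lt_of_le_of_lt (Nat.sub_le _ _) j.isLt⟩ j else 0) := by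
    intro i j
    have h1 : (A * X) i j = (X * A) i j := by rw [hX]
    rw [mul_apply, mul_apply, sumL lam A hdiag helse (fun k => X k j) i,
      sumR lam A hdiag helse (fun k => X i k) j] at h1
    exact add_left_cancel h1
  ext i j
  rw [mul_apply, mul_apply,
    sumL lam A hdiag helse (fun k => (X.map (fun x => |x|)) k j) i,
    sumR lam A hdiag helse (fun k => (X.map (fun x => |x|)) i k) j]
  congr 1
  have hL : (if h : (i : ℕ) + 1 < n then
      A i ⟨(i : ℕ) + 1, h⟩ * (X.map (fun x => |x|)) ⟨(i : ℕ) + 1, h⟩ j else 0) =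
      |if h : (i : ℕ) + 1 < n then A i ⟨(i : ℕ) + 1, h⟩ * X ⟨(i : ℕ) + 1, h⟩ j else 0| := by
    by_cases h : (i : ℕ) + 1 < n
    · rw [dif_pos h, dif_pos h, Matrix.map_apply]
      rcases hsuper i ⟨(i : ℕ) + 1, h⟩ rfl with h0 | h0 <;> rw [h0] <;> simp
    · rw [dif_neg h, dif_neg h, abs_zero]
  have hR : (if h : 0 < (j : ℕ) then
      (X.map (fun x => |x|)) i ⟨(j : ℕ) - 1, Nat.lt_of_le_of_lt (Nat.sub_le _ _) j.isLt⟩ *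
        A ⟨(j : ℕ) - 1, Nat.lt_of_le_of_lt (Nat.sub_le _ _) j.isLt⟩ j else 0) =
      |if h : 0 < (j : ℕ) then
        X i ⟨(j : ℕ) - 1, Nat.lt_of_le_of_lt (Nat.sub_le _ _) j.isLt⟩ *
          A ⟨(j : ℕ) - 1, Nat.lt_of_le_of_lt (Nat.sub_le _ _) j.isLt⟩ j else 0| := by
    by_cases h : 0 < (j : ℕ)
    · rw [dif_pos h, dif_pos h, Matrix.map_apply]
      have hj : (j : ℕ) = ((⟨(j : ℕ) - 1, Nat.lt_of_le_of_lt (Nat.sub_le _ _) j.isLt⟩ :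
          Fin n) : ℕ) + 1 := by simp; omega
      rcases hsuper _ j hj with h0 | h0 <;> rw [h0] <;> simp [abs_mul]
    · rw [dif_neg h, dif_neg h, abs_zero]
  rw [hL, hR, key i j]

/-- If `A` is a direct sum of Jordan blocks all with the same real eigenvalue `λ`
(i.e. `A` has `λ` on the diagonal, entries `0` or `1` on the superdiagonal and zeros
elsewhere), then the centralizer of `A` contains a nonnegative covering matrix. -/
theorem stmt18 (n : ℕ) (lam : ℝ) (A : Matrix (Fin n) (Fin n) ℝ)
    (hdiag : ∀ i : Fin n, A i i = lam)
    (hsuper : ∀ i j : Fin n, (j : ℕ) = (i : ℕ) + 1 → A i j = 0 ∨ A i j = 1)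
    (helse : ∀ i j : Fin n, (i : ℕ) ≠ (j : ℕ) → (j : ℕ) ≠ (i : ℕ) + 1 → A i j = 0) :
    ∃ R : Matrix (Fin n) (Fin n) ℝ,
      A * R = R * A ∧ (∀ i j, 0 ≤ R i j) ∧
      ∀ i j : Fin n, (∃ X : Matrix (Fin n) (Fin n) ℝ, A * X = X * A ∧ X i j ≠ 0) →
        R i j ≠ 0 := by
  classical
  set Y : Fin n × Fin n → Matrix (Fin n) (Fin n) ℝ := fun p =>
    if h : ∃ X : Matrix (Fin n) (Fin n) ℝ, A * X = X * A ∧ X p.1 p.2 ≠ 0 then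
      (Classical.choose h).map (fun x => |x|) else 0 with hY
  refine ⟨∑ p : Fin n × Fin n, Y p, ?_, ?_, ?_⟩
  · rw [Finset.mul_sum, Finset.sum_mul]
    refine Finset.sum_congr rfl fun p _ => ?_
    rw [hY]
    by_cases h : ∃ X : Matrix (Fin n) (Fin n) ℝ, A * X = X * A ∧ X p.1 p.2 ≠ 0
    · simp only [dif_pos h]
      exact habs lam A hdiag hsuper helse _ (Classical.choose_spec h).1
    · simp [dif_neg h]
  · intro i j
    rw [Matrix.sum_apply]
    refine Finset.sum_nonneg fun p _ => ?_
    rw [hY]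
    by_cases h : ∃ X : Matrix (Fin n) (Fin n) ℝ, A * X = X * A ∧ X p.1 p.2 ≠ 0
    · simp only [dif_pos h, Matrix.map_apply]; exact abs_nonneg _
    · simp [dif_neg h]
  · intro i j h
    rw [Matrix.sum_apply]
    refine ne_of_gt (Finset.sum_pos' ?_ ⟨(i, j), Finset.mem_univ _, ?_⟩)
    · intro p _
      rw [hY]
      by_cases h' : ∃ X : Matrix (Fin n) (Fin n) ℝ, A * X = X * A ∧ X p.1 p.2 ≠ 0
      · simp only [dif_pos h', Matrix.map_apply]; exact abs_nonneg _
      · simp [dif_neg h']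
    · rw [hY]
      simp only [dif_pos h, Matrix.map_apply]
      exact abs_pos.mpr (Classical.choose_spec h).2
end

section
/- Let 𝒞 = { [[a, b], [−b, a]] : a, b ∈ ℝ } ⊆ M_2(ℝ). Then for every invertible C ∈ M_2(ℝ), every entrywise nonnegative matrix in C^{-1}𝒞C is a nonnegative scalar multiple of the identity; consequently 𝒞 is not similar to an algebra generated by nonnegative non-scalar matrices. -/
open Matrix

lemma key19 (C : Matrix (Fin 2) (Fin 2) ℝ) (hC : IsUnit C.det)
    (X : Matrix (Fin 2) (Fin 2) ℝ)
    (hX : ∃ a b : ℝ, X = C⁻¹ * !![a, b; -b, a] * C)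
    (hpos : ∀ i j, 0 ≤ X i j) :
    ∃ c : ℝ, 0 ≤ c ∧ X = c • (1 : Matrix (Fin 2) (Fin 2) ℝ) := by
  obtain ⟨a, b, rfl⟩ := hX
  set M : Matrix (Fin 2) (Fin 2) ℝ := !![a, b; -b, a] with hM
  set X := C⁻¹ * M * C with hXdef
  have hinv : C⁻¹ * C = 1 := nonsing_inv_mul C hC
  have hinv' : C * C⁻¹ = 1 := mul_nonsing_inv C hC
  have htr : X.trace = M.trace := by
    rw [hXdef, trace_mul_comm, ← mul_assoc, hinv', one_mul]
  have hdet : X.det = M.det := by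
    have : C⁻¹.det * C.det = 1 := by
      rw [← det_mul, hinv, det_one]
    rw [hXdef, det_mul, det_mul]
    linear_combination M.det * this
  have htr' : X 0 0 + X 1 1 = 2 * a := by
    have := htr
    simp [trace_fin_two, hM] at this
    linarith
  have hdet' : X 0 0 * X 1 1 - X 0 1 * X 1 0 = a ^ 2 + b ^ 2 := by
    have := hdet
    simp [det_fin_two, hM] at this
    nlinarith [this]
  have h4 : 4 * b ^ 2 = -((X 0 0 - X 1 1) ^ 2) - 4 * (X 0 1 * X 1 0) := by
    linear_combination (X 0 0 + X 1 1 + 2 * a) * htr' - 4 * hdet'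
  have hb2 : b ^ 2 = 0 := le_antisymm
    (by nlinarith [mul_nonneg (hpos 0 1) (hpos 1 0), sq_nonneg (X 0 0 - X 1 1)])
    (sq_nonneg b)
  have hb : b = 0 := by
    have := pow_eq_zero_iff (n := 2) (by norm_num) |>.mp hb2
    exact this
  have hMs : M = a • (1 : Matrix (Fin 2) (Fin 2) ℝ) := by
    subst hb
    ext i j
    fin_cases i <;> fin_cases j <;> simp [hM]
  have hXs : X = a • (1 : Matrix (Fin 2) (Fin 2) ℝ) := by
    rw [hXdef, hMs, Matrix.mul_smul, Matrix.smul_mul, mul_one, hinv]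
  refine ⟨a, ?_, hXs⟩
  have := hpos 0 0
  rw [hXs] at this
  simpa using this

/-- For the algebra `𝒞 ≅ ℂ` of matrices `[[a,b],[−b,a]]`: in any conjugate `C⁻¹𝒞C`,
every entrywise nonnegative matrix is a nonnegative scalar multiple of the identity;
consequently no conjugate of `𝒞` is generated by nonnegative non-scalar matrices. -/
theorem stmt19 :
    (∀ C : Matrix (Fin 2) (Fin 2) ℝ, IsUnit C.det →
      ∀ X : Matrix (Fin 2) (Fin 2) ℝ,
        (∃ a b : ℝ, X = C⁻¹ * !![a, b; -b, a] * C) →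
        (∀ i j, 0 ≤ X i j) → ∃ c : ℝ, 0 ≤ c ∧ X = c • (1 : Matrix (Fin 2) (Fin 2) ℝ)) ∧
    ¬ ∃ C : Matrix (Fin 2) (Fin 2) ℝ, IsUnit C.det ∧
        ∃ S : Set (Matrix (Fin 2) (Fin 2) ℝ),
          (∀ B ∈ S, (∀ i j, 0 ≤ B i j) ∧
            ¬ ∃ c : ℝ, B = c • (1 : Matrix (Fin 2) (Fin 2) ℝ)) ∧
          (∀ X, X ∈ Algebra.adjoin ℝ S ↔ ∃ a b : ℝ, X = C⁻¹ * !![a, b; -b, a] * C) := by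
  constructor
  · exact key19
  · rintro ⟨C, hC, S, hS, hiff⟩
    rcases Set.eq_empty_or_nonempty S with hE | ⟨B, hB⟩
    · -- S empty: adjoin is ⊥, but C⁻¹ J C ∈ adjoin is not scalar
      have hJ : (C⁻¹ * !![(0:ℝ), 1; -1, 0] * C) ∈ Algebra.adjoin ℝ S := by
        rw [hiff]; exact ⟨0, 1, by norm_num⟩
      rw [hE, Algebra.adjoin_empty, Algebra.mem_bot] at hJ
      obtain ⟨r, hr⟩ := hJ
      have hinv' : C * C⁻¹ = 1 := mul_nonsing_inv C hC
      have : C * (algebraMap ℝ (Matrix (Fin 2) (Fin 2) ℝ) r) * C⁻¹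
          = !![(0:ℝ), 1; -1, 0] := by
        rw [hr]
        simp only [← mul_assoc]
        rw [hinv', one_mul, mul_assoc, hinv', mul_one]
      have h01 : (C * (algebraMap ℝ (Matrix (Fin 2) (Fin 2) ℝ) r) * C⁻¹) 0 1 = 1 := by
        rw [this]; norm_num
      have h00 : (C * (algebraMap ℝ (Matrix (Fin 2) (Fin 2) ℝ) r) * C⁻¹) 0 0 = 0 := by
        rw [this]; norm_num
      have hsc : C * (algebraMap ℝ (Matrix (Fin 2) (Fin 2) ℝ) r) * C⁻¹
          = r • (1 : Matrix (Fin 2) (Fin 2) ℝ) := by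
        rw [Algebra.algebraMap_eq_smul_one, Matrix.mul_smul, mul_one, Matrix.smul_mul, hinv']
      rw [hsc] at h01
      simp [Matrix.one_apply] at h01
    · obtain ⟨hBpos, hBnsc⟩ := hS B hB
      have hmem : B ∈ Algebra.adjoin ℝ S := Algebra.subset_adjoin hB
      rw [hiff] at hmem
      obtain ⟨c, _, hc⟩ := key19 C hC B hmem hBpos
      exact hBnsc ⟨c, hc⟩
end
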